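/- arXiv:1309.7421 — 3 statements merged into one kernel-verified Lean document; each statement's English description precedes it below -/
import Mathlib

section
/- Uniqueness of classical solutions of the degenerate forward problem: Let f : Q → ℝ be bounded and φ : [0,l] → ℝ be bounded, and let u₁, u₂ both be admissible functions satisfying 𝓛u_i(x,t) = f(x,t) for every (x,t) ∈ [0,l] × (0,T] and u_i(x,0) = φ(x) for every x ∈ [0,l] (i = 1,2). Then u₁(x,t) = u₂(x,t) for every (x,t) ∈ Q̄. Note that no boundary condition is imposed at the degenerate boundaries x = 0 and x = l. -/
/-!
The difference `w = u₁ - u₂` solves `𝓛w = 0` with zero initial data, and we show by a maximum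
principle that any `w` with `𝓛w ≤ 0` and `w(·, 0) ≤ 0` is nonpositive. At a positive maximum
`(x₀, t₀)` of `w` on `Q̄` we have `t₀ > 0` and `w_t ≥ 0`. In the interior `w_x = 0` and
`w_xx ≤ 0`; on the degenerate boundary, say at `x₀ = 0`, the diffusion term vanishes because
`a 0 = 0`, while `a' 0 ≥ 0` (as `a ≥ 0` has a minimum there) and `w_x ≤ 0` (as `w` has a
maximum there) make the drift term `a' w_x` nonpositive as well. Hence `𝓛w ≥ q w > 0` at the
maximum, a contradiction.
-/

open Set Filter Topology

lemma IsMaxOn.hasDerivWithinAt_Icc_right_nonneg {g : ℝ → ℝ} {d a b : ℝ}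
    (hmax : IsMaxOn g (Icc a b) b)
    (hd : HasDerivWithinAt g d (Icc a b) b) (hab : a < b) : 0 ≤ d := by
  have hcone : a - b ∈ posTangentConeAt (Icc a b) b :=
    sub_mem_posTangentConeAt_of_segment_subset (by rw [segment_symm, segment_eq_Icc hab.le])
  have := hmax.localize.hasFDerivWithinAt_nonpos hd.hasFDerivWithinAt hcone
  rw [ContinuousLinearMap.toSpanSingleton_apply, smul_eq_mul] at this
  exact nonneg_of_mul_nonpos_right this (sub_neg.2 hab)

lemma IsMaxOn.hasDerivWithinAt_Icc_left_nonpos {g : ℝ → ℝ} {d a b : ℝ}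
    (hmax : IsMaxOn g (Icc a b) a)
    (hd : HasDerivWithinAt g d (Icc a b) a) (hab : a < b) : d ≤ 0 := by
  have hcone : b - a ∈ posTangentConeAt (Icc a b) a :=
    sub_mem_posTangentConeAt_of_segment_subset (segment_eq_Icc hab.le).subset
  have := hmax.localize.hasFDerivWithinAt_nonpos hd.hasFDerivWithinAt hcone
  rw [ContinuousLinearMap.toSpanSingleton_apply, smul_eq_mul] at this
  exact nonpos_of_mul_nonpos_right this (sub_pos.2 hab)

lemma IsLocalMax.hasDerivAt_deriv_nonpos {g g' : ℝ → ℝ} {g'' x₀ : ℝ}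
    (hmax : IsLocalMax g x₀) (hg : ∀ᶠ x in 𝓝 x₀, HasDerivAt g (g' x) x)
    (hg'' : HasDerivAt g' g'' x₀) : g'' ≤ 0 := by
  -- If `g'' > 0`, then `x₀` is also a local minimum, so `g` is locally constant and `g'' = 0`.
  by_contra! hpos
  have hderiv : deriv g =ᶠ[𝓝 x₀] g' := hg.mono fun x hx => hx.deriv
  have hmin : IsLocalMin g x₀ :=
    isLocalMin_of_deriv_deriv_pos (by rwa [(hg''.congr_of_eventuallyEq hderiv).deriv])
      ((hderiv.eq_of_nhds).trans (hmax.hasDerivAt_eq_zero hg.self_of_nhds))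
      hg.self_of_nhds.continuousAt
  have hconst : g =ᶠ[𝓝 x₀] fun _ => g x₀ := by
    filter_upwards [hmax, hmin] with y hle hge using le_antisymm hle hge
  have : deriv (deriv g) x₀ = 0 := by
    rw [hconst.deriv.deriv_eq]
    simp
  linarith [(hg''.congr_of_eventuallyEq hderiv).deriv]

structure Admissible (α β T : ℝ) (u ut ux uxx : ℝ → ℝ → ℝ) : Prop where
  continuousOn : ContinuousOn (fun p : ℝ × ℝ => u p.1 p.2) (Icc α β ×ˢ Icc 0 T)
  hasDerivWithinAt_t : ∀ x ∈ Icc α β, ∀ t ∈ Ioc 0 T,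
    HasDerivWithinAt (fun τ => u x τ) (ut x t) (Icc 0 T) t
  hasDerivWithinAt_x : ∀ x ∈ Icc α β, ∀ t ∈ Ioc 0 T,
    HasDerivWithinAt (fun s => u s t) (ux x t) (Icc α β) x
  hasDerivWithinAt_xx : ∀ x ∈ Icc α β, ∀ t ∈ Ioc 0 T,
    HasDerivWithinAt (fun s => ux s t) (uxx x t) (Icc α β) x

lemma Admissible.sub {α β T : ℝ} {u ut ux uxx v vt vx vxx : ℝ → ℝ → ℝ}
    (hu : Admissible α β T u ut ux uxx) (hv : Admissible α β T v vt vx vxx) :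
    Admissible α β T (fun x t => u x t - v x t) (fun x t => ut x t - vt x t)
      (fun x t => ux x t - vx x t) (fun x t => uxx x t - vxx x t) where
  continuousOn := hu.continuousOn.sub hv.continuousOn
  hasDerivWithinAt_t x hx t ht :=
    (hu.hasDerivWithinAt_t x hx t ht).sub (hv.hasDerivWithinAt_t x hx t ht)
  hasDerivWithinAt_x x hx t ht :=
    (hu.hasDerivWithinAt_x x hx t ht).sub (hv.hasDerivWithinAt_x x hx t ht)
  hasDerivWithinAt_xx x hx t ht :=
    (hu.hasDerivWithinAt_xx x hx t ht).sub (hv.hasDerivWithinAt_xx x hx t ht)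

/-- `𝓛u = u_t - (a u_x)_x + q u`, where `ut`, `ux`, `uxx` are the derivatives of `u`. -/
def degenerateParabolicOp (a a' q : ℝ → ℝ) (u ut ux uxx : ℝ → ℝ → ℝ) (x t : ℝ) : ℝ :=
  ut x t - (a x * uxx x t + a' x * ux x t) + q x * u x t

lemma degenerateParabolicOp_sub (a a' q : ℝ → ℝ) (u ut ux uxx v vt vx vxx : ℝ → ℝ → ℝ)
    (x t : ℝ) :
    degenerateParabolicOp a a' q (fun x t => u x t - v x t) (fun x t => ut x t - vt x t)
        (fun x t => ux x t - vx x t) (fun x t => uxx x t - vxx x t) x t =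
      degenerateParabolicOp a a' q u ut ux uxx x t -
        degenerateParabolicOp a a' q v vt vx vxx x t := by
  unfold degenerateParabolicOp
  ring

section DegenerateCoefficient

variable {α β : ℝ} {a a' : ℝ → ℝ}

lemma isMinOn_Icc_left_of_degenerate (haα : a α = 0) (haβ : a β = 0)
    (hapos : ∀ x ∈ Ioo α β, 0 < a x) : IsMinOn a (Icc α β) α := by
  refine isMinOn_iff.2 fun x hx => ?_
  rcases hx.2.eq_or_lt with rfl | hxβ
  · rw [haα, haβ]
  rcases hx.1.eq_or_lt with rfl | hαx
  · exact le_rfl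
  · exact haα ▸ (hapos x ⟨hαx, hxβ⟩).le

lemma isMinOn_Icc_right_of_degenerate (haα : a α = 0) (haβ : a β = 0)
    (hapos : ∀ x ∈ Ioo α β, 0 < a x) : IsMinOn a (Icc α β) β := by
  refine isMinOn_iff.2 fun x hx => ?_
  rw [haβ, ← haα]
  exact isMinOn_iff.1 (isMinOn_Icc_left_of_degenerate haα haβ hapos) x hx

lemma degenerate_elliptic_part_nonpos_of_isMaxOn {g g' : ℝ → ℝ} {g'' x₀ : ℝ}
    (hαβ : α < β) (ha : ∀ x ∈ Icc α β, HasDerivWithinAt a (a' x) (Icc α β) x)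
    (haα : a α = 0) (haβ : a β = 0) (hapos : ∀ x ∈ Ioo α β, 0 < a x)
    (hg : ∀ x ∈ Icc α β, HasDerivWithinAt g (g' x) (Icc α β) x)
    (hg'' : HasDerivWithinAt g' g'' (Icc α β) x₀) (hx₀ : x₀ ∈ Icc α β)
    (hmax : IsMaxOn g (Icc α β) x₀) :
    a x₀ * g'' + a' x₀ * g' x₀ ≤ 0 := by
  rcases hx₀.1.eq_or_lt with rfl | hαx
  · have hg'α : g' α ≤ 0 := hmax.hasDerivWithinAt_Icc_left_nonpos (hg α hx₀) hαβ
    have ha'α : -a' α ≤ 0 :=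
      (isMinOn_Icc_left_of_degenerate haα haβ hapos).neg.hasDerivWithinAt_Icc_left_nonpos
        (ha α hx₀).neg hαβ
    rw [haα, zero_mul, zero_add]
    exact mul_nonpos_of_nonneg_of_nonpos (neg_nonpos.1 ha'α) hg'α
  rcases hx₀.2.eq_or_lt with rfl | hxβ
  · have hg'β : 0 ≤ g' x₀ := hmax.hasDerivWithinAt_Icc_right_nonneg (hg x₀ hx₀) hαβ
    have ha'β : 0 ≤ -a' x₀ :=
      (isMinOn_Icc_right_of_degenerate haα haβ hapos).neg.hasDerivWithinAt_Icc_right_nonneg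
        (ha x₀ hx₀).neg hαβ
    rw [haβ, zero_mul, zero_add]
    exact mul_nonpos_of_nonpos_of_nonneg (neg_nonneg.1 ha'β) hg'β
  have hnhds : Icc α β ∈ 𝓝 x₀ := Icc_mem_nhds hαx hxβ
  have hlocmax : IsLocalMax g x₀ := hmax.isLocalMax hnhds
  have hderiv : ∀ᶠ x in 𝓝 x₀, HasDerivAt g (g' x) x := by
    filter_upwards [Ioo_mem_nhds hαx hxβ] with x hx
    exact (hg x (Ioo_subset_Icc_self hx)).hasDerivAt (Icc_mem_nhds hx.1 hx.2)
  have hg'0 : g' x₀ = 0 := hlocmax.hasDerivAt_eq_zero hderiv.self_of_nhds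
  have hg''0 : g'' ≤ 0 := hlocmax.hasDerivAt_deriv_nonpos hderiv (hg''.hasDerivAt hnhds)
  rw [hg'0, mul_zero, add_zero]
  exact mul_nonpos_of_nonneg_of_nonpos (hapos x₀ ⟨hαx, hxβ⟩).le hg''0

end DegenerateCoefficient

section MaximumPrinciple

variable {α β T : ℝ} {a a' q : ℝ → ℝ}

theorem nonpos_of_degenerateParabolicOp_nonpos {w wt wx wxx : ℝ → ℝ → ℝ} (hαβ : α < β)
    (ha : ∀ x ∈ Icc α β, HasDerivWithinAt a (a' x) (Icc α β) x)
    (haα : a α = 0) (haβ : a β = 0) (hapos : ∀ x ∈ Ioo α β, 0 < a x)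
    (hqpos : ∀ x ∈ Icc α β, 0 < q x) (hw : Admissible α β T w wt wx wxx)
    (hLw : ∀ x ∈ Icc α β, ∀ t ∈ Ioc 0 T,
      degenerateParabolicOp a a' q w wt wx wxx x t ≤ 0)
    (hw0 : ∀ x ∈ Icc α β, w x 0 ≤ 0) :
    ∀ x ∈ Icc α β, ∀ t ∈ Icc 0 T, w x t ≤ 0 := by
  intro x hx t ht
  by_contra! hpos
  obtain ⟨⟨x₀, t₀⟩, ⟨hx₀, ht₀⟩, hmax⟩ :=
    (isCompact_Icc.prod isCompact_Icc).exists_isMaxOn ⟨(x, t), hx, ht⟩ hw.continuousOn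
  have hmax' : ∀ y ∈ Icc α β, ∀ τ ∈ Icc 0 T, w y τ ≤ w x₀ t₀ := fun y hy τ hτ =>
    isMaxOn_iff.1 hmax (y, τ) ⟨hy, hτ⟩
  have hM : 0 < w x₀ t₀ := hpos.trans_le (hmax' x hx t ht)
  have ht₀pos : 0 < t₀ := ht₀.1.lt_of_ne fun h => (hw0 x₀ hx₀).not_gt (h ▸ hM)
  have ht₀' : t₀ ∈ Ioc 0 T := ⟨ht₀pos, ht₀.2⟩
  have hwt : 0 ≤ wt x₀ t₀ :=
    IsMaxOn.hasDerivWithinAt_Icc_right_nonneg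
      (isMaxOn_iff.2 fun τ hτ => hmax' x₀ hx₀ τ ⟨hτ.1, hτ.2.trans ht₀.2⟩)
      ((hw.hasDerivWithinAt_t x₀ hx₀ t₀ ht₀').mono (Icc_subset_Icc_right ht₀.2)) ht₀pos
  have hspace : a x₀ * wxx x₀ t₀ + a' x₀ * wx x₀ t₀ ≤ 0 :=
    degenerate_elliptic_part_nonpos_of_isMaxOn hαβ ha haα haβ hapos
      (fun y hy => hw.hasDerivWithinAt_x y hy t₀ ht₀')
      (hw.hasDerivWithinAt_xx x₀ hx₀ t₀ ht₀') hx₀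
      (isMaxOn_iff.2 fun y hy => hmax' y hy t₀ ht₀)
  have hLw₀ := hLw x₀ hx₀ t₀ ht₀'
  unfold degenerateParabolicOp at hLw₀
  linarith [mul_pos (hqpos x₀ hx₀) hM]

theorem le_of_degenerateParabolicOp_le {u ut ux uxx v vt vx vxx : ℝ → ℝ → ℝ}
    (hαβ : α < β) (ha : ∀ x ∈ Icc α β, HasDerivWithinAt a (a' x) (Icc α β) x)
    (haα : a α = 0) (haβ : a β = 0) (hapos : ∀ x ∈ Ioo α β, 0 < a x)
    (hqpos : ∀ x ∈ Icc α β, 0 < q x)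
    (hu : Admissible α β T u ut ux uxx) (hv : Admissible α β T v vt vx vxx)
    (hL : ∀ x ∈ Icc α β, ∀ t ∈ Ioc 0 T,
      degenerateParabolicOp a a' q u ut ux uxx x t ≤ degenerateParabolicOp a a' q v vt vx vxx x t)
    (h0 : ∀ x ∈ Icc α β, u x 0 ≤ v x 0) :
    ∀ x ∈ Icc α β, ∀ t ∈ Icc 0 T, u x t ≤ v x t := by
  intro x hx t ht
  refine sub_nonpos.1 <| nonpos_of_degenerateParabolicOp_nonpos hαβ ha haα haβ hapos hqpos
    (hu.sub hv) (fun y hy τ hτ => ?_) (fun y hy => sub_nonpos.2 (h0 y hy)) x hx t ht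
  rw [degenerateParabolicOp_sub]
  exact sub_nonpos.2 (hL y hy τ hτ)

end MaximumPrinciple

theorem uniqueness_degenerate_forward_problem_general
    (l T q₀ : ℝ) (hl : 0 < l) (hq₀ : 0 < q₀)
    (a a' q : ℝ → ℝ)
    (ha : ∀ x ∈ Icc (0:ℝ) l, HasDerivWithinAt a (a' x) (Icc (0:ℝ) l) x)
    (ha0 : a 0 = 0) (hal : a l = 0)
    (hapos : ∀ x ∈ Ioo (0:ℝ) l, 0 < a x)
    (hq : ∀ x ∈ Icc (0:ℝ) l, q₀ ≤ q x)
    (f : ℝ → ℝ → ℝ) (φ : ℝ → ℝ)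
    (u₁ u₁t u₁x u₁xx u₂ u₂t u₂x u₂xx : ℝ → ℝ → ℝ)
    (hu₁ : ContinuousOn (fun p : ℝ × ℝ => u₁ p.1 p.2) (Icc (0:ℝ) l ×ˢ Icc (0:ℝ) T))
    (hu₁t : ∀ x ∈ Icc (0:ℝ) l, ∀ t ∈ Ioc (0:ℝ) T,
      HasDerivWithinAt (fun τ => u₁ x τ) (u₁t x t) (Icc (0:ℝ) T) t)
    (hu₁x : ∀ x ∈ Icc (0:ℝ) l, ∀ t ∈ Ioc (0:ℝ) T,
      HasDerivWithinAt (fun s => u₁ s t) (u₁x x t) (Icc (0:ℝ) l) x)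
    (hu₁xx : ∀ x ∈ Icc (0:ℝ) l, ∀ t ∈ Ioc (0:ℝ) T,
      HasDerivWithinAt (fun s => u₁x s t) (u₁xx x t) (Icc (0:ℝ) l) x)
    (hu₂ : ContinuousOn (fun p : ℝ × ℝ => u₂ p.1 p.2) (Icc (0:ℝ) l ×ˢ Icc (0:ℝ) T))
    (hu₂t : ∀ x ∈ Icc (0:ℝ) l, ∀ t ∈ Ioc (0:ℝ) T,
      HasDerivWithinAt (fun τ => u₂ x τ) (u₂t x t) (Icc (0:ℝ) T) t)
    (hu₂x : ∀ x ∈ Icc (0:ℝ) l, ∀ t ∈ Ioc (0:ℝ) T,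
      HasDerivWithinAt (fun s => u₂ s t) (u₂x x t) (Icc (0:ℝ) l) x)
    (hu₂xx : ∀ x ∈ Icc (0:ℝ) l, ∀ t ∈ Ioc (0:ℝ) T,
      HasDerivWithinAt (fun s => u₂x s t) (u₂xx x t) (Icc (0:ℝ) l) x)
    (hL₁ : ∀ x ∈ Icc (0:ℝ) l, ∀ t ∈ Ioc (0:ℝ) T,
      u₁t x t - (a x * u₁xx x t + a' x * u₁x x t) + q x * u₁ x t = f x t)
    (hL₂ : ∀ x ∈ Icc (0:ℝ) l, ∀ t ∈ Ioc (0:ℝ) T,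
      u₂t x t - (a x * u₂xx x t + a' x * u₂x x t) + q x * u₂ x t = f x t)
    (hinit₁ : ∀ x ∈ Icc (0:ℝ) l, u₁ x 0 = φ x)
    (hinit₂ : ∀ x ∈ Icc (0:ℝ) l, u₂ x 0 = φ x) :
    ∀ x ∈ Icc (0:ℝ) l, ∀ t ∈ Icc (0:ℝ) T, u₁ x t = u₂ x t := by
  have h₁ : Admissible 0 l T u₁ u₁t u₁x u₁xx := ⟨hu₁, hu₁t, hu₁x, hu₁xx⟩
  have h₂ : Admissible 0 l T u₂ u₂t u₂x u₂xx := ⟨hu₂, hu₂t, hu₂x, hu₂xx⟩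
  have hqpos : ∀ x ∈ Icc 0 l, 0 < q x := fun x hx => hq₀.trans_le (hq x hx)
  intro x hx t ht
  apply le_antisymm
  · exact le_of_degenerateParabolicOp_le hl ha ha0 hal hapos hqpos h₁ h₂
      (fun y hy τ hτ => ((hL₁ y hy τ hτ).trans (hL₂ y hy τ hτ).symm).le)
      (fun y hy => ((hinit₁ y hy).trans (hinit₂ y hy).symm).le) x hx t ht
  · exact le_of_degenerateParabolicOp_le hl ha ha0 hal hapos hqpos h₂ h₁
      (fun y hy τ hτ => ((hL₂ y hy τ hτ).trans (hL₁ y hy τ hτ).symm).le)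
      (fun y hy => ((hinit₂ y hy).trans (hinit₁ y hy).symm).le) x hx t ht

/-- Uniqueness of classical solutions of the degenerate forward problem: two admissible
solutions of `𝓛u = f` on `[0,l] × (0,T]` with the same initial data `φ` coincide on `Q̄`;
no boundary condition is imposed at the degenerate boundaries `x = 0` and `x = l`. -/
theorem uniqueness_degenerate_forward_problem
    (l T q₀ : ℝ) (hl : 0 < l) (hT : 0 < T) (hq₀ : 0 < q₀)
    (a a' q : ℝ → ℝ)
    (ha : ∀ x ∈ Icc (0:ℝ) l, HasDerivWithinAt a (a' x) (Icc (0:ℝ) l) x)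
    (ha'c : ContinuousOn a' (Icc (0:ℝ) l))
    (ha0 : a 0 = 0) (hal : a l = 0)
    (hapos : ∀ x ∈ Ioo (0:ℝ) l, 0 < a x)
    (hqc : ContinuousOn q (Icc (0:ℝ) l))
    (hq : ∀ x ∈ Icc (0:ℝ) l, q₀ ≤ q x)
    (f : ℝ → ℝ → ℝ) (φ : ℝ → ℝ)
    (hfb : ∃ M, ∀ x ∈ Ioo (0:ℝ) l, ∀ t ∈ Ioc (0:ℝ) T, |f x t| ≤ M)
    (hφb : ∃ M, ∀ x ∈ Icc (0:ℝ) l, |φ x| ≤ M)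
    (u₁ u₁t u₁x u₁xx u₂ u₂t u₂x u₂xx : ℝ → ℝ → ℝ)
    (hu₁ : ContinuousOn (fun p : ℝ × ℝ => u₁ p.1 p.2) (Icc (0:ℝ) l ×ˢ Icc (0:ℝ) T))
    (hu₁t : ∀ x ∈ Icc (0:ℝ) l, ∀ t ∈ Ioc (0:ℝ) T,
      HasDerivWithinAt (fun τ => u₁ x τ) (u₁t x t) (Icc (0:ℝ) T) t)
    (hu₁x : ∀ x ∈ Icc (0:ℝ) l, ∀ t ∈ Ioc (0:ℝ) T,
      HasDerivWithinAt (fun s => u₁ s t) (u₁x x t) (Icc (0:ℝ) l) x)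
    (hu₁xx : ∀ x ∈ Icc (0:ℝ) l, ∀ t ∈ Ioc (0:ℝ) T,
      HasDerivWithinAt (fun s => u₁x s t) (u₁xx x t) (Icc (0:ℝ) l) x)
    (hu₂ : ContinuousOn (fun p : ℝ × ℝ => u₂ p.1 p.2) (Icc (0:ℝ) l ×ˢ Icc (0:ℝ) T))
    (hu₂t : ∀ x ∈ Icc (0:ℝ) l, ∀ t ∈ Ioc (0:ℝ) T,
      HasDerivWithinAt (fun τ => u₂ x τ) (u₂t x t) (Icc (0:ℝ) T) t)
    (hu₂x : ∀ x ∈ Icc (0:ℝ) l, ∀ t ∈ Ioc (0:ℝ) T,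
      HasDerivWithinAt (fun s => u₂ s t) (u₂x x t) (Icc (0:ℝ) l) x)
    (hu₂xx : ∀ x ∈ Icc (0:ℝ) l, ∀ t ∈ Ioc (0:ℝ) T,
      HasDerivWithinAt (fun s => u₂x s t) (u₂xx x t) (Icc (0:ℝ) l) x)
    (hL₁ : ∀ x ∈ Icc (0:ℝ) l, ∀ t ∈ Ioc (0:ℝ) T,
      u₁t x t - (a x * u₁xx x t + a' x * u₁x x t) + q x * u₁ x t = f x t)
    (hL₂ : ∀ x ∈ Icc (0:ℝ) l, ∀ t ∈ Ioc (0:ℝ) T,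
      u₂t x t - (a x * u₂xx x t + a' x * u₂x x t) + q x * u₂ x t = f x t)
    (hinit₁ : ∀ x ∈ Icc (0:ℝ) l, u₁ x 0 = φ x)
    (hinit₂ : ∀ x ∈ Icc (0:ℝ) l, u₂ x 0 = φ x) :
    ∀ x ∈ Icc (0:ℝ) l, ∀ t ∈ Icc (0:ℝ) T, u₁ x t = u₂ x t :=
  uniqueness_degenerate_forward_problem_general l T q₀ hl hq₀ a a' q ha ha0 hal hapos hq f φ u₁ u₁t
    u₁x u₁xx u₂ u₂t u₂x u₂xx hu₁ hu₁t hu₁x hu₁xx hu₂ hu₂t hu₂x hu₂xx hL₁ hL₂ hinit₁ hinit₂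
end

section
/- Preservation of nonnegativity and boundedness (estimate 0 ≤ u ≤ ‖φ‖_∞ of Section 2): Let φ : [0,l] → ℝ be bounded with φ(x) ≥ 0 for all x ∈ [0,l], and let u be an admissible function satisfying the homogeneous equation 𝓛u(x,t) = 0 for every (x,t) ∈ [0,l] × (0,T] and u(x,0) = φ(x) for every x ∈ [0,l]. Then 0 ≤ u(x,t) ≤ sup_{[0,l]} φ for every (x,t) ∈ Q̄. -/
/-!
Weak minimum principle. Let `w` be a supersolution (`𝓛w ≥ 0`) with `w(·,0) ≥ 0`, and let
`(x₀, t₀)` be a minimum point of `w` on `Q̄`. If `t₀ > 0`, then `w_t ≤ 0` there, and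
`a w_xx + a' w_x ≥ 0`: in the interior `w_x = 0 ≤ w_xx`; at an endpoint `a` vanishes, and since
`a ≥ 0` also has its minimum there, `a'` and `w_x` are one-sided derivatives at a minimum from
the same side and have the same sign. Hence `q w ≥ 0` at `(x₀, t₀)`, so `w ≥ 0` on `Q̄`.
Apply this to `u` and to `sup φ - u`.
-/

open Set Filter Topology

theorem IsLocalMinOn.hasDerivWithinAt_nonneg_of_Ioo_subset {f : ℝ → ℝ} {s : Set ℝ}
    {a b f' : ℝ} (h : IsLocalMinOn f s a) (hf : HasDerivWithinAt f f' s a) (hab : a < b)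
    (hs : Ioo a b ⊆ s) : 0 ≤ f' := by
  have hb : b - a ∈ posTangentConeAt s a :=
    sub_mem_posTangentConeAt_of_openSegment_subset (by rwa [openSegment_eq_Ioo hab])
  have := h.hasFDerivWithinAt_nonneg hf hb
  rw [ContinuousLinearMap.toSpanSingleton_apply, smul_eq_mul] at this
  exact nonneg_of_mul_nonneg_right this (sub_pos.2 hab)

theorem IsLocalMinOn.hasDerivWithinAt_nonpos_of_Ioo_subset {f : ℝ → ℝ} {s : Set ℝ}
    {a b f' : ℝ} (h : IsLocalMinOn f s b) (hf : HasDerivWithinAt f f' s b) (hab : a < b)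
    (hs : Ioo a b ⊆ s) : f' ≤ 0 := by
  have ha : a - b ∈ posTangentConeAt s b :=
    sub_mem_posTangentConeAt_of_openSegment_subset <| by
      rwa [openSegment_symm, openSegment_eq_Ioo hab]
  have := h.hasFDerivWithinAt_nonneg hf ha
  rw [ContinuousLinearMap.toSpanSingleton_apply, smul_eq_mul] at this
  exact nonpos_of_mul_nonneg_right this (sub_neg.2 hab)

/-- If `f'' < 0`, the second derivative test makes `x₀` a local maximum as well, so `f` is
locally constant and `f'' = 0`. -/
theorem IsLocalMin.nonneg_of_hasDerivAt_of_hasDerivAt {f f' : ℝ → ℝ} {f'' x₀ : ℝ}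
    (hmin : IsLocalMin f x₀) (hf : ∀ᶠ y in 𝓝 x₀, HasDerivAt f (f' y) y)
    (hf' : HasDerivAt f' f'' x₀) : 0 ≤ f'' := by
  by_contra! hneg
  have hderiv : deriv f =ᶠ[𝓝 x₀] f' := hf.mono fun y hy => hy.deriv
  have hmax : IsLocalMax f x₀ :=
    isLocalMax_of_deriv_deriv_neg (by rwa [(hf'.congr_of_eventuallyEq hderiv).deriv])
      (by rw [hderiv.eq_of_nhds]; exact hmin.hasDerivAt_eq_zero hf.self_of_nhds)
      hf.self_of_nhds.continuousAt
  have hconst : f' =ᶠ[𝓝 x₀] fun _ => 0 := by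
    filter_upwards [hf, (hmin.and hmax).eventually_nhds] with y hy hyz
    exact hy.unique <| (hasDerivAt_const y (f x₀)).congr_of_eventuallyEq <|
      hyz.mono fun z hz => le_antisymm hz.2 hz.1
  exact hneg.ne' ((hasDerivAt_const x₀ (0 : ℝ)).congr_of_eventuallyEq hconst |>.unique hf')

theorem degenerate_operator_nonneg_of_isMinOn {l a'₀ f''₀ x₀ : ℝ} {a f f' : ℝ → ℝ}
    (hl : 0 < l) (ha_nonneg : ∀ x ∈ Icc 0 l, 0 ≤ a x) (ha0 : a 0 = 0) (hal : a l = 0)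
    (ha : HasDerivWithinAt a a'₀ (Icc 0 l) x₀)
    (hf : ∀ x ∈ Icc 0 l, HasDerivWithinAt f (f' x) (Icc 0 l) x)
    (hf' : HasDerivWithinAt f' f''₀ (Icc 0 l) x₀)
    (hx₀ : x₀ ∈ Icc 0 l) (hmin : IsMinOn f (Icc 0 l) x₀) :
    0 ≤ a x₀ * f''₀ + a'₀ * f' x₀ := by
  have ha_min : ∀ y ∈ Icc 0 l, a y = 0 → IsLocalMinOn a (Icc 0 l) y := fun y _ h =>
    IsMinOn.localize fun x hx => by simpa [h] using ha_nonneg x hx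
  rcases hx₀.1.eq_or_lt with rfl | h0
  · rw [ha0, zero_mul, zero_add]
    exact mul_nonneg
      ((ha_min 0 hx₀ ha0).hasDerivWithinAt_nonneg_of_Ioo_subset ha hl Ioo_subset_Icc_self)
      (hmin.localize.hasDerivWithinAt_nonneg_of_Ioo_subset (hf 0 hx₀) hl Ioo_subset_Icc_self)
  rcases hx₀.2.eq_or_lt' with rfl | hl'
  · rw [hal, zero_mul, zero_add]
    exact mul_nonneg_of_nonpos_of_nonpos
      ((ha_min l hx₀ hal).hasDerivWithinAt_nonpos_of_Ioo_subset ha h0 Ioo_subset_Icc_self)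
      (hmin.localize.hasDerivWithinAt_nonpos_of_Ioo_subset (hf l hx₀) h0 Ioo_subset_Icc_self)
  have hnhds : Icc 0 l ∈ 𝓝 x₀ := Icc_mem_nhds h0 hl'
  have hlocal : IsLocalMin f x₀ := hmin.isLocalMin hnhds
  have hf_at : ∀ᶠ y in 𝓝 x₀, HasDerivAt f (f' y) y := by
    filter_upwards [Ioo_mem_nhds h0 hl'] with y hy
    exact (hf y (Ioo_subset_Icc_self hy)).hasDerivAt (Icc_mem_nhds hy.1 hy.2)
  rw [hlocal.hasDerivAt_eq_zero hf_at.self_of_nhds, mul_zero, add_zero]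
  exact mul_nonneg (ha_nonneg x₀ hx₀)
    (hlocal.nonneg_of_hasDerivAt_of_hasDerivAt hf_at (hf'.hasDerivAt hnhds))

theorem nonneg_of_degenerate_supersolution {l T : ℝ} {a a' q : ℝ → ℝ}
    {w wt wx wxx : ℝ → ℝ → ℝ} (hl : 0 < l)
    (ha : ∀ x ∈ Icc 0 l, HasDerivWithinAt a (a' x) (Icc 0 l) x)
    (ha_nonneg : ∀ x ∈ Icc 0 l, 0 ≤ a x) (ha0 : a 0 = 0) (hal : a l = 0)
    (hq : ∀ x ∈ Icc 0 l, 0 < q x)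
    (hw : ContinuousOn (fun p : ℝ × ℝ => w p.1 p.2) (Icc 0 l ×ˢ Icc 0 T))
    (hwt : ∀ x ∈ Icc 0 l, ∀ t ∈ Ioc 0 T,
      HasDerivWithinAt (fun τ => w x τ) (wt x t) (Icc 0 T) t)
    (hwx : ∀ x ∈ Icc 0 l, ∀ t ∈ Ioc 0 T,
      HasDerivWithinAt (fun s => w s t) (wx x t) (Icc 0 l) x)
    (hwxx : ∀ x ∈ Icc 0 l, ∀ t ∈ Ioc 0 T,
      HasDerivWithinAt (fun s => wx s t) (wxx x t) (Icc 0 l) x)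
    (hLw : ∀ x ∈ Icc 0 l, ∀ t ∈ Ioc 0 T,
      0 ≤ wt x t - (a x * wxx x t + a' x * wx x t) + q x * w x t)
    (hw0 : ∀ x ∈ Icc 0 l, 0 ≤ w x 0) :
    ∀ x ∈ Icc 0 l, ∀ t ∈ Icc 0 T, 0 ≤ w x t := by
  intro x hx t ht
  obtain ⟨⟨x₀, t₀⟩, ⟨hx₀, ht₀⟩, hmin⟩ :=
    (isCompact_Icc.prod isCompact_Icc).exists_isMinOn ⟨(x, t), hx, ht⟩ hw
  refine le_trans ?_ (hmin (mk_mem_prod hx ht))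
  change 0 ≤ w x₀ t₀
  rcases ht₀.1.eq_or_lt with rfl | ht₀_pos
  · exact hw0 x₀ hx₀
  have ht₀' : t₀ ∈ Ioc 0 T := ⟨ht₀_pos, ht₀.2⟩
  have htime : wt x₀ t₀ ≤ 0 :=
    IsLocalMinOn.hasDerivWithinAt_nonpos_of_Ioo_subset
      (IsMinOn.localize fun τ hτ => hmin (mk_mem_prod hx₀ hτ)) (hwt x₀ hx₀ t₀ ht₀')
      ht₀_pos (Ioo_subset_Icc_self.trans (Icc_subset_Icc_right ht₀.2))
  have hspace : 0 ≤ a x₀ * wxx x₀ t₀ + a' x₀ * wx x₀ t₀ :=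
    degenerate_operator_nonneg_of_isMinOn hl ha_nonneg ha0 hal (ha x₀ hx₀)
      (fun y hy => hwx y hy t₀ ht₀') (hwxx x₀ hx₀ t₀ ht₀') hx₀
      fun y hy => hmin (mk_mem_prod hy ht₀)
  have hqw : 0 ≤ q x₀ * w x₀ t₀ := by linarith [hLw x₀ hx₀ t₀ ht₀']
  exact nonneg_of_mul_nonneg_right hqw (hq x₀ hx₀)

theorem nonnegativity_and_bound_general
    (l T q₀ : ℝ) (hl : 0 < l) (hq₀ : 0 < q₀)
    (a a' q : ℝ → ℝ)
    (ha : ∀ x ∈ Icc (0:ℝ) l, HasDerivWithinAt a (a' x) (Icc (0:ℝ) l) x)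
    (ha0 : a 0 = 0) (hal : a l = 0)
    (hapos : ∀ x ∈ Ioo (0:ℝ) l, 0 < a x)
    (hq : ∀ x ∈ Icc (0:ℝ) l, q₀ ≤ q x)
    (u ut ux uxx : ℝ → ℝ → ℝ)
    (hu : ContinuousOn (fun p : ℝ × ℝ => u p.1 p.2) (Icc (0:ℝ) l ×ˢ Icc (0:ℝ) T))
    (hut : ∀ x ∈ Icc (0:ℝ) l, ∀ t ∈ Ioc (0:ℝ) T,
      HasDerivWithinAt (fun τ => u x τ) (ut x t) (Icc (0:ℝ) T) t)
    (hux : ∀ x ∈ Icc (0:ℝ) l, ∀ t ∈ Ioc (0:ℝ) T,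
      HasDerivWithinAt (fun s => u s t) (ux x t) (Icc (0:ℝ) l) x)
    (huxx : ∀ x ∈ Icc (0:ℝ) l, ∀ t ∈ Ioc (0:ℝ) T,
      HasDerivWithinAt (fun s => ux s t) (uxx x t) (Icc (0:ℝ) l) x)
    (φ : ℝ → ℝ)
    (hφb : ∃ M, ∀ x ∈ Icc (0:ℝ) l, |φ x| ≤ M)
    (hφn : ∀ x ∈ Icc (0:ℝ) l, 0 ≤ φ x)
    (hL : ∀ x ∈ Icc (0:ℝ) l, ∀ t ∈ Ioc (0:ℝ) T,
      ut x t - (a x * uxx x t + a' x * ux x t) + q x * u x t = 0)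
    (hinit : ∀ x ∈ Icc (0:ℝ) l, u x 0 = φ x) :
    ∀ x ∈ Icc (0:ℝ) l, ∀ t ∈ Icc (0:ℝ) T,
      0 ≤ u x t ∧ u x t ≤ sSup (φ '' Icc (0:ℝ) l) := by
  have ha_nonneg : ∀ x ∈ Icc 0 l, 0 ≤ a x := by
    rintro x ⟨h0, hl'⟩
    rcases h0.eq_or_lt with rfl | h0
    · exact ha0.ge
    rcases hl'.eq_or_lt with rfl | hl'
    · exact hal.ge
    exact (hapos x ⟨h0, hl'⟩).le
  have hq_pos : ∀ x ∈ Icc 0 l, 0 < q x := fun x hx => hq₀.trans_le (hq x hx)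
  obtain ⟨M, hM⟩ := hφb
  set S := sSup (φ '' Icc 0 l)
  have hφS : ∀ x ∈ Icc 0 l, φ x ≤ S := fun x hx =>
    le_csSup ⟨M, forall_mem_image.2 fun y hy => (abs_le.1 (hM y hy)).2⟩ (mem_image_of_mem φ hx)
  have hS : 0 ≤ S := (hφn 0 (left_mem_Icc.2 hl.le)).trans (hφS 0 (left_mem_Icc.2 hl.le))
  have hlower := nonneg_of_degenerate_supersolution hl ha ha_nonneg ha0 hal hq_pos hu hut hux huxx
    (fun x hx t ht => (hL x hx t ht).ge) fun x hx => hinit x hx ▸ hφn x hx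
  have hupper := nonneg_of_degenerate_supersolution (w := fun x t => S - u x t)
    hl ha ha_nonneg ha0 hal hq_pos (continuousOn_const.sub hu)
    (fun x hx t ht => (hut x hx t ht).const_sub S) (fun x hx t ht => (hux x hx t ht).const_sub S)
    (fun x hx t ht => (huxx x hx t ht).neg)
    (fun x hx t ht => by linarith [hL x hx t ht, mul_nonneg (hq_pos x hx).le hS])
    fun x hx => sub_nonneg.2 (hinit x hx ▸ hφS x hx)
  exact fun x hx t ht => ⟨hlower x hx t ht, sub_nonneg.1 (hupper x hx t ht)⟩

/-- Preservation of nonnegativity and boundedness: if `φ ≥ 0` is bounded on `[0,l]` and the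
admissible `u` solves `𝓛u = 0` on `[0,l] × (0,T]` with `u(·,0) = φ`, then
`0 ≤ u ≤ sup_{[0,l]} φ` on `Q̄`. -/
theorem nonnegativity_and_bound
    (l T q₀ : ℝ) (hl : 0 < l) (hT : 0 < T) (hq₀ : 0 < q₀)
    (a a' q : ℝ → ℝ)
    (ha : ∀ x ∈ Icc (0:ℝ) l, HasDerivWithinAt a (a' x) (Icc (0:ℝ) l) x)
    (ha'c : ContinuousOn a' (Icc (0:ℝ) l))
    (ha0 : a 0 = 0) (hal : a l = 0)
    (hapos : ∀ x ∈ Ioo (0:ℝ) l, 0 < a x)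
    (hqc : ContinuousOn q (Icc (0:ℝ) l))
    (hq : ∀ x ∈ Icc (0:ℝ) l, q₀ ≤ q x)
    (u ut ux uxx : ℝ → ℝ → ℝ)
    (hu : ContinuousOn (fun p : ℝ × ℝ => u p.1 p.2) (Icc (0:ℝ) l ×ˢ Icc (0:ℝ) T))
    (hut : ∀ x ∈ Icc (0:ℝ) l, ∀ t ∈ Ioc (0:ℝ) T,
      HasDerivWithinAt (fun τ => u x τ) (ut x t) (Icc (0:ℝ) T) t)
    (hux : ∀ x ∈ Icc (0:ℝ) l, ∀ t ∈ Ioc (0:ℝ) T,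
      HasDerivWithinAt (fun s => u s t) (ux x t) (Icc (0:ℝ) l) x)
    (huxx : ∀ x ∈ Icc (0:ℝ) l, ∀ t ∈ Ioc (0:ℝ) T,
      HasDerivWithinAt (fun s => ux s t) (uxx x t) (Icc (0:ℝ) l) x)
    (φ : ℝ → ℝ)
    (hφb : ∃ M, ∀ x ∈ Icc (0:ℝ) l, |φ x| ≤ M)
    (hφn : ∀ x ∈ Icc (0:ℝ) l, 0 ≤ φ x)
    (hL : ∀ x ∈ Icc (0:ℝ) l, ∀ t ∈ Ioc (0:ℝ) T,
      ut x t - (a x * uxx x t + a' x * ux x t) + q x * u x t = 0)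
    (hinit : ∀ x ∈ Icc (0:ℝ) l, u x 0 = φ x) :
    ∀ x ∈ Icc (0:ℝ) l, ∀ t ∈ Icc (0:ℝ) T,
      0 ≤ u x t ∧ u x t ≤ sSup (φ '' Icc (0:ℝ) l) :=
  nonnegativity_and_bound_general l T q₀ hl hq₀ a a' q ha ha0 hal hapos hq u ut ux uxx hu hut hux
    huxx φ hφb hφn hL hinit
end

section
/- Uniqueness for the inverse radiative coefficient problem (Theorem 2.5, in comparable pairs): Let δ > 0 and G_δ = (−δ, l+δ). Assume a ∈ W^{4,∞}(G_δ) with a ≥ 0 on G_δ, a(0) = a(l) = 0, a(x) > 0 on (0,l); assume φ ∈ W^{5,∞}(G_δ) with φ ≥ 0 and φ ≢ 0 on (0,l). Let q₁, q₂ ∈ W^{3,∞}(G_δ) with q₁ ≥ 0 and q₂ ≥ 0, and suppose either q₁(x) ≥ q₂(x) for all x ∈ G_δ or q₁(x) ≤ q₂(x) for all x ∈ G_δ. For i = 1,2 let u_i ∈ W^{3,∞}(Q̄) be the solution of the degenerate problem (u_i)_t − (a(x)(u_i)_x)_x + q_i(x)u_i = 0 on Q with u_i(x,0) = φ(x) on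 (0,l). If u₁(x,T) = u₂(x,T) for all x ∈ [0,l], then q₁ = q₂ on [0,l] and u₁ = u₂ on Q̄. -/
/-!
The weak maximum principle holds for `∂ₜ - ∂ₓ(a ∂ₓ) + q` on `[0, l] × [0, T]` without any
boundary condition: since `a ≥ 0` near the zeros `0` and `l` of `a`, also `a'` vanishes there, and
the operator reduces to `∂ₜ + q` on the lateral boundary.

Assume `q₂ ≤ q₁`. The maximum principle gives `0 ≤ u₁ ≤ u₂`. At `t = T` the functions `u₁` and
`u₂` agree together with their `x`-derivatives, so the equations give
`∂ₜ (u₂ - u₁) = (q₁ - q₂) u₁ ≥ 0` there, while `u₂ - u₁ ≥ 0` vanishes at `t = T`, forcing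
`∂ₜ (u₂ - u₁) ≤ 0`. Hence `(q₁ - q₂) u₁(·, T) = 0`. Comparing `u₁` with a bump
`e^{-kt} (ρ² - (x - x₁ - ct)²)³` that travels from a point `x₁` where `φ > 0` to any
`x₀ ∈ (0, l)`, and that stays where `a` is bounded below, shows `u₁(x₀, T) > 0`. So `q₁ = q₂`,
and the maximum principle once more gives `u₁ = u₂`.
-/

open Set Filter Topology Function Real

theorem IsLocalMaxOn.hasDerivWithinAt_Icc_right_nonneg {f : ℝ → ℝ} {a b c : ℝ} (hab : a < b)
    (hmax : IsLocalMaxOn f (Icc a b) b) (hf : HasDerivWithinAt f c (Icc a b) b) : 0 ≤ c := by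
  have hcone : a - b ∈ posTangentConeAt (Icc a b) b :=
    sub_mem_posTangentConeAt_of_segment_subset
      ((convex_Icc a b).segment_subset (right_mem_Icc.2 hab.le) (left_mem_Icc.2 hab.le))
  have := hmax.hasFDerivWithinAt_nonpos hf hcone
  rw [ContinuousLinearMap.toSpanSingleton_apply, smul_eq_mul] at this
  nlinarith

theorem IsLocalMax.hasDerivAt_deriv_nonpos_s9 {f f' : ℝ → ℝ} {x₀ c : ℝ} (h : IsLocalMax f x₀)
    (hf : ∀ᶠ x in 𝓝 x₀, HasDerivAt f (f' x) x) (hf' : HasDerivAt f' c x₀) : c ≤ 0 := by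
  -- if `c > 0`, the second derivative test makes `x₀` a local minimum too, so `f` is locally
  -- constant and `c = 0`
  by_contra! hc
  have hderiv : deriv f =ᶠ[𝓝 x₀] f' := hf.mono fun x hx => hx.deriv
  have hmin : IsLocalMin f x₀ :=
    isLocalMin_of_deriv_deriv_pos (by rwa [hderiv.deriv_eq, hf'.deriv])
      (by rw [hderiv.eq_of_nhds]; exact h.hasDerivAt_eq_zero hf.self_of_nhds)
      hf.self_of_nhds.continuousAt
  have hconst : f =ᶠ[𝓝 x₀] fun _ => f x₀ := by
    filter_upwards [h, hmin] with x h₁ h₂ using le_antisymm h₁ h₂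
  have hzero : f' =ᶠ[𝓝 x₀] fun _ => 0 :=
    hderiv.symm.trans (hconst.deriv.trans (by simp))
  exact hc.ne' (hf'.unique ((hasDerivAt_const x₀ (0:ℝ)).congr_of_eventuallyEq hzero))

theorem HasDerivWithinAt.hasDerivAt_of_differentiableAt {f : ℝ → ℝ} {f' x : ℝ} {s : Set ℝ}
    (h : HasDerivWithinAt f f' s x) (hs : UniqueDiffWithinAt ℝ s x)
    (hd : DifferentiableAt ℝ f x) : HasDerivAt f f' x := by
  rw [hs.eq_deriv _ h hd.hasDerivAt.hasDerivWithinAt]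
  exact hd.hasDerivAt

structure HasClassicalDerivs (l T : ℝ) (v vt vx vxx : ℝ → ℝ → ℝ) : Prop where
  continuousOn : ContinuousOn (uncurry v) (Icc 0 l ×ˢ Icc 0 T)
  hasDerivWithinAt_t :
    ∀ x ∈ Icc 0 l, ∀ t ∈ Ioc 0 T, HasDerivWithinAt (v x ·) (vt x t) (Icc 0 T) t
  hasDerivWithinAt_x :
    ∀ x ∈ Icc 0 l, ∀ t ∈ Ioc 0 T, HasDerivWithinAt (v · t) (vx x t) (Icc 0 l) x
  hasDerivWithinAt_xx :
    ∀ x ∈ Icc 0 l, ∀ t ∈ Ioc 0 T, HasDerivWithinAt (vx · t) (vxx x t) (Icc 0 l) x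

namespace HasClassicalDerivs

variable {l T : ℝ} {v vt vx vxx w wt wx wxx : ℝ → ℝ → ℝ}

theorem sub (hv : HasClassicalDerivs l T v vt vx vxx) (hw : HasClassicalDerivs l T w wt wx wxx) :
    HasClassicalDerivs l T (v - w) (vt - wt) (vx - wx) (vxx - wxx) where
  continuousOn := hv.continuousOn.sub hw.continuousOn
  hasDerivWithinAt_t x hx t ht :=
    (hv.hasDerivWithinAt_t x hx t ht).sub (hw.hasDerivWithinAt_t x hx t ht)
  hasDerivWithinAt_x x hx t ht :=
    (hv.hasDerivWithinAt_x x hx t ht).sub (hw.hasDerivWithinAt_x x hx t ht)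
  hasDerivWithinAt_xx x hx t ht :=
    (hv.hasDerivWithinAt_xx x hx t ht).sub (hw.hasDerivWithinAt_xx x hx t ht)

theorem of_hasDerivAt (hc : Continuous (uncurry v)) (ht : ∀ x t, HasDerivAt (v x ·) (vt x t) t)
    (hx : ∀ x t, HasDerivAt (v · t) (vx x t) x) (hxx : ∀ x t, HasDerivAt (vx · t) (vxx x t) x) :
    HasClassicalDerivs l T v vt vx vxx where
  continuousOn := hc.continuousOn
  hasDerivWithinAt_t x _ t _ := (ht x t).hasDerivWithinAt
  hasDerivWithinAt_x x _ t _ := (hx x t).hasDerivWithinAt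
  hasDerivWithinAt_xx x _ t _ := (hxx x t).hasDerivWithinAt

theorem zero : HasClassicalDerivs l T 0 0 0 0 :=
  of_hasDerivAt continuous_const (fun _ _ => hasDerivAt_const _ _)
    (fun _ _ => hasDerivAt_const _ _) (fun _ _ => hasDerivAt_const _ _)

theorem mul_time (σ : ℝ) :
    HasClassicalDerivs l T (fun _ t => σ * t) (fun _ _ => σ) 0 0 :=
  of_hasDerivAt (by fun_prop) (fun _ t => by simpa using (hasDerivAt_id t).const_mul σ)
    (fun _ _ => hasDerivAt_const _ _) (fun _ _ => hasDerivAt_const _ _)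

theorem continuousOn_slice (hv : HasClassicalDerivs l T v vt vx vxx) {t : ℝ} (ht : t ∈ Icc 0 T) :
    ContinuousOn (v · t) (Icc 0 l) :=
  hv.continuousOn.comp (continuous_id.prodMk continuous_const).continuousOn fun _ hx => ⟨hx, ht⟩

theorem initial_le_of_le_on_Ioo (hv : HasClassicalDerivs l T v vt vx vxx)
    (hw : HasClassicalDerivs l T w wt wx wxx) (hl : 0 < l) (hT : 0 ≤ T)
    (h : ∀ x ∈ Ioo 0 l, v x 0 ≤ w x 0) : ∀ x ∈ Icc 0 l, v x 0 ≤ w x 0 := fun x hx =>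
  ContinuousWithinAt.closure_le (f := (v · 0)) (g := (w · 0)) (by rwa [closure_Ioo hl.ne])
    ((hv.continuousOn_slice (left_mem_Icc.2 hT) x hx).mono Ioo_subset_Icc_self)
    ((hw.continuousOn_slice (left_mem_Icc.2 hT) x hx).mono Ioo_subset_Icc_self) h

theorem timeDeriv_nonneg_of_isMaxOn (hv : HasClassicalDerivs l T v vt vx vxx)
    {S : Set (ℝ × ℝ)} {x₀ t₀ : ℝ} (hx₀ : x₀ ∈ Icc 0 l) (ht₀ : t₀ ∈ Ioc 0 T)
    (hS : S ∈ 𝓝[Icc 0 l ×ˢ Icc 0 T] (x₀, t₀)) (hmax : IsMaxOn (uncurry v) S (x₀, t₀)) :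
    0 ≤ vt x₀ t₀ := by
  have hslice : Tendsto (fun τ => (x₀, τ)) (𝓝[Icc 0 T] t₀) (𝓝[Icc 0 l ×ˢ Icc 0 T] (x₀, t₀)) :=
    tendsto_nhdsWithin_iff.2 ⟨(continuous_const.prodMk continuous_id).continuousWithinAt,
      eventually_mem_nhdsWithin.mono fun τ hτ => ⟨hx₀, hτ⟩⟩
  have htime : IsLocalMaxOn (v x₀ ·) (Icc 0 t₀) t₀ :=
    (hslice.eventually (mem_of_superset hS fun p hp => hmax hp)).filter_mono
      (nhdsWithin_mono _ (Icc_subset_Icc_right ht₀.2))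
  exact htime.hasDerivWithinAt_Icc_right_nonneg ht₀.1
    ((hv.hasDerivWithinAt_t x₀ hx₀ t₀ ht₀).mono (Icc_subset_Icc_right ht₀.2))

theorem principalPart_nonneg_of_isMaxOn (hv : HasClassicalDerivs l T v vt vx vxx)
    {S : Set (ℝ × ℝ)} {x₀ t₀ α β : ℝ} (hx₀ : x₀ ∈ Ioo 0 l) (ht₀ : t₀ ∈ Ioc 0 T)
    (hS : S ∈ 𝓝[Icc 0 l ×ˢ Icc 0 T] (x₀, t₀)) (hmax : IsMaxOn (uncurry v) S (x₀, t₀))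
    (hα : 0 ≤ α) : 0 ≤ vt x₀ t₀ - (α * vxx x₀ t₀ + β * vx x₀ t₀) := by
  have hx₀' : x₀ ∈ Icc 0 l := Ioo_subset_Icc_self hx₀
  have hslice : Tendsto (fun s => (s, t₀)) (𝓝 x₀) (𝓝[Icc 0 l ×ˢ Icc 0 T] (x₀, t₀)) := by
    rw [← nhdsWithin_eq_nhds.2 (Icc_mem_nhds hx₀.1 hx₀.2)]
    exact tendsto_nhdsWithin_iff.2 ⟨(continuous_id.prodMk continuous_const).continuousWithinAt,
      eventually_mem_nhdsWithin.mono fun s hs => ⟨hs, Ioc_subset_Icc_self ht₀⟩⟩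
  have hspace : IsLocalMax (v · t₀) x₀ :=
    hslice.eventually (mem_of_superset hS fun p hp => hmax hp)
  have hvx : ∀ᶠ x in 𝓝 x₀, HasDerivAt (v · t₀) (vx x t₀) x := by
    filter_upwards [Ioo_mem_nhds hx₀.1 hx₀.2] with x hx
    exact (hv.hasDerivWithinAt_x x (Ioo_subset_Icc_self hx) t₀ ht₀).hasDerivAt
      (Icc_mem_nhds hx.1 hx.2)
  have hvt : 0 ≤ vt x₀ t₀ := hv.timeDeriv_nonneg_of_isMaxOn hx₀' ht₀ hS hmax
  have hvx₀ : vx x₀ t₀ = 0 := hspace.hasDerivAt_eq_zero hvx.self_of_nhds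
  have hvxx : vxx x₀ t₀ ≤ 0 := hspace.hasDerivAt_deriv_nonpos_s9 hvx
    ((hv.hasDerivWithinAt_xx x₀ hx₀' t₀ ht₀).hasDerivAt (Icc_mem_nhds hx₀.1 hx₀.2))
  rw [hvx₀]
  nlinarith [mul_nonneg hα (neg_nonneg.2 hvxx)]

end HasClassicalDerivs

def parabolicOp (a a' q : ℝ → ℝ) (v vt vx vxx : ℝ → ℝ → ℝ) (x t : ℝ) : ℝ :=
  vt x t - (a x * vxx x t + a' x * vx x t) + q x * v x t

/-- Tilting by `σ t` makes the maximum principle strict: at a maximum of `f - σ t` reached at a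
positive time, the time derivative of `f` is at least `σ > 0`. -/
theorem exists_isMaxOn_sub_mul_snd {K : Set (ℝ × ℝ)} (hK : IsCompact K) {f : ℝ × ℝ → ℝ}
    (hf : ContinuousOn f K) {p : ℝ × ℝ} (hp : p ∈ K) (hp₂ : 0 ≤ p.2) (hfp : 0 < f p) :
    ∃ σ > 0, ∃ p₀ ∈ K, IsMaxOn (fun q => f q - σ * q.2) K p₀ ∧ σ * p₀.2 < f p₀ := by
  set σ := f p / (p.2 + 1) with hσ
  have hσ₀ : 0 < σ := by positivity
  obtain ⟨p₀, hp₀, hmax⟩ := hK.exists_isMaxOn ⟨p, hp⟩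
    (hf.sub (continuous_const.mul continuous_snd).continuousOn (g := fun q => σ * q.2))
  refine ⟨σ, hσ₀, p₀, hp₀, hmax, ?_⟩
  have hval : f p - σ * p.2 = σ := by rw [hσ]; field_simp; ring
  have hle : f p - σ * p.2 ≤ f p₀ - σ * p₀.2 := hmax hp
  linarith

section Comparison

variable {l T : ℝ} {a a' q : ℝ → ℝ} {z zt zx zxx u ut ux uxx : ℝ → ℝ → ℝ}

theorem le_of_parabolicOp_le (hz : HasClassicalDerivs l T z zt zx zxx)
    (hu : HasClassicalDerivs l T u ut ux uxx) (ha : ∀ x ∈ Ioo 0 l, 0 ≤ a x) (ha₀ : a 0 = 0)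
    (haₗ : a l = 0) (ha'₀ : a' 0 = 0) (ha'ₗ : a' l = 0) (hq : ∀ x ∈ Icc 0 l, 0 ≤ q x)
    (hL : ∀ x ∈ Icc 0 l, ∀ t ∈ Ioc 0 T,
      parabolicOp a a' q z zt zx zxx x t ≤ parabolicOp a a' q u ut ux uxx x t)
    (h₀ : ∀ x ∈ Icc 0 l, z x 0 ≤ u x 0) :
    ∀ x ∈ Icc 0 l, ∀ t ∈ Icc 0 T, z x t ≤ u x t := by
  intro x hx t ht
  by_contra! hlt
  obtain ⟨σ, hσ, ⟨x₀, t₀⟩, ⟨hx₀, ht₀T⟩, hmax, hpos⟩ :=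
    exists_isMaxOn_sub_mul_snd (isCompact_Icc.prod isCompact_Icc) (hz.sub hu).continuousOn
      (p := (x, t)) ⟨hx, ht⟩ ht.1 (sub_pos.2 hlt)
  simp only [uncurry_apply_pair, Pi.sub_apply] at hpos
  have ht₀ : t₀ ∈ Ioc 0 T := by
    refine ⟨ht₀T.1.lt_of_ne fun h => ?_, ht₀T.2⟩
    subst h
    linarith [h₀ x₀ hx₀]
  have hw := (hz.sub hu).sub (HasClassicalDerivs.mul_time σ)
  have hS := self_mem_nhdsWithin (s := Icc 0 l ×ˢ Icc 0 T) (a := (x₀, t₀))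
  have hprincipal : 0 ≤ (zt x₀ t₀ - ut x₀ t₀ - σ)
      - (a x₀ * (zxx x₀ t₀ - uxx x₀ t₀) + a' x₀ * (zx x₀ t₀ - ux x₀ t₀)) := by
    -- at `x₀ ∈ {0, l}` only the time derivative survives
    rcases hx₀.1.eq_or_lt with rfl | h0
    · simpa [ha₀, ha'₀] using hw.timeDeriv_nonneg_of_isMaxOn hx₀ ht₀ hS hmax
    rcases hx₀.2.eq_or_lt with rfl | hl
    · simpa [haₗ, ha'ₗ] using hw.timeDeriv_nonneg_of_isMaxOn hx₀ ht₀ hS hmax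
    simpa using hw.principalPart_nonneg_of_isMaxOn ⟨h0, hl⟩ ht₀ hS hmax (ha x₀ ⟨h0, hl⟩)
  have hqzu : 0 ≤ q x₀ * (z x₀ t₀ - u x₀ t₀) :=
    mul_nonneg (hq x₀ hx₀) (by nlinarith [ht₀.1])
  have hL₀ := hL x₀ hx₀ t₀ ht₀
  unfold parabolicOp at hL₀
  linarith

theorem le_on_tube_of_parabolicOp_le {path : ℝ → ℝ} (hpath : Continuous path) {ρ : ℝ}
    (hz : HasClassicalDerivs l T z zt zx zxx) (hu : HasClassicalDerivs l T u ut ux uxx)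
    (htube : ∀ t ∈ Icc 0 T, ∀ x, |x - path t| ≤ ρ → x ∈ Ioo 0 l)
    (ha : ∀ x ∈ Ioo 0 l, 0 ≤ a x) (hq : ∀ x ∈ Ioo 0 l, 0 ≤ q x)
    (hL : ∀ t ∈ Ioc 0 T, ∀ x, |x - path t| < ρ →
      parabolicOp a a' q z zt zx zxx x t ≤ parabolicOp a a' q u ut ux uxx x t)
    (hlateral : ∀ t ∈ Icc 0 T, ∀ x, |x - path t| = ρ → z x t ≤ u x t)
    (h₀ : ∀ x, |x - path 0| ≤ ρ → z x 0 ≤ u x 0) :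
    ∀ t ∈ Icc 0 T, ∀ x, |x - path t| ≤ ρ → z x t ≤ u x t := by
  set K := {p : ℝ × ℝ | p.2 ∈ Icc 0 T ∧ |p.1 - path p.2| ≤ ρ}
  have hKR : K ⊆ Icc 0 l ×ˢ Icc 0 T := fun p hp =>
    ⟨Ioo_subset_Icc_self (htube _ hp.1 _ hp.2), hp.1⟩
  have hK : IsCompact K := (isCompact_Icc.prod isCompact_Icc).of_isClosed_subset
    ((isClosed_Icc.preimage continuous_snd).inter
      (isClosed_le (continuous_fst.sub (hpath.comp continuous_snd)).abs continuous_const))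
    hKR
  intro t ht x hx
  by_contra! hlt
  obtain ⟨σ, hσ, ⟨x₀, t₀⟩, ⟨ht₀T, hx₀K⟩, hmax, hpos⟩ :=
    exists_isMaxOn_sub_mul_snd hK ((hz.sub hu).continuousOn.mono hKR)
      (p := (x, t)) ⟨ht, hx⟩ ht.1 (sub_pos.2 hlt)
  simp only [uncurry_apply_pair, Pi.sub_apply] at hpos
  have ht₀ : t₀ ∈ Ioc 0 T := by
    refine ⟨ht₀T.1.lt_of_ne fun h => ?_, ht₀T.2⟩
    subst h
    linarith [h₀ x₀ hx₀K]
  have hx₀ : |x₀ - path t₀| < ρ :=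
    hx₀K.lt_of_ne fun h => by nlinarith [hlateral t₀ ht₀T x₀ h, ht₀.1]
  have hS : K ∈ 𝓝[Icc 0 l ×ˢ Icc 0 T] (x₀, t₀) := by
    have hU : {p : ℝ × ℝ | |p.1 - path p.2| < ρ} ∈ 𝓝 (x₀, t₀) :=
      (isOpen_lt (continuous_fst.sub (hpath.comp continuous_snd)).abs continuous_const).mem_nhds hx₀
    filter_upwards [nhdsWithin_le_nhds hU, self_mem_nhdsWithin] with p hp hpR
    exact ⟨hpR.2, hp.le⟩
  have hx₀l := htube t₀ ht₀T x₀ hx₀K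
  have hw := (hz.sub hu).sub (HasClassicalDerivs.mul_time σ)
  have hprincipal := hw.principalPart_nonneg_of_isMaxOn hx₀l ht₀ hS hmax (ha x₀ hx₀l) (β := a' x₀)
  simp only [Pi.sub_apply, Pi.zero_apply, sub_zero] at hprincipal
  have hqzu : 0 ≤ q x₀ * (z x₀ t₀ - u x₀ t₀) :=
    mul_nonneg (hq x₀ hx₀l) (by nlinarith [ht₀.1])
  have hL₀ := hL t₀ ht₀ x₀ hx₀
  unfold parabolicOp at hL₀
  linarith

end Comparison

noncomputable def travellingWave (K k x₁ c : ℝ) (g : ℝ → ℝ) (x t : ℝ) : ℝ :=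
  K * exp (-(k * t)) * g (x - (x₁ + c * t))

theorem hasClassicalDerivs_travellingWave {l T : ℝ} {g g' g'' : ℝ → ℝ}
    (hg : ∀ y, HasDerivAt g (g' y) y) (hg' : ∀ y, HasDerivAt g' (g'' y) y) (K k x₁ c : ℝ) :
    HasClassicalDerivs l T (travellingWave K k x₁ c g)
      (travellingWave K k x₁ c fun y => -k * g y - c * g' y)
      (travellingWave K k x₁ c g') (travellingWave K k x₁ c g'') := by
  have hgc : Continuous g := continuous_iff_continuousAt.2 fun y => (hg y).continuousAt
  refine .of_hasDerivAt (by unfold travellingWave; fun_prop) (fun x t => ?_) (fun x t => ?_)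
    (fun x t => ?_)
  · have hy : HasDerivAt (fun τ => x - (x₁ + c * τ)) (-c) t := by
      simpa using ((hasDerivAt_id t).const_mul c).const_add x₁ |>.const_sub x
    have he : HasDerivAt (fun τ => K * exp (-(k * τ))) (K * (exp (-(k * t)) * -k)) t := by
      simpa using (((hasDerivAt_id t).const_mul k).neg.exp).const_mul K
    exact (he.mul ((hg _).comp t hy)).congr_deriv
      (by simp only [travellingWave, comp_apply]; ring)
  · exact (((hg _).comp x ((hasDerivAt_id x).sub_const (x₁ + c * t))).const_mul
      (K * exp (-(k * t)))).congr_deriv (by simp [travellingWave])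
  · exact (((hg' _).comp x ((hasDerivAt_id x).sub_const (x₁ + c * t))).const_mul
      (K * exp (-(k * t)))).congr_deriv (by simp [travellingWave])

theorem parabolicOp_travellingWave (a a' q g g' g'' : ℝ → ℝ) (K k x₁ c x t : ℝ) :
    parabolicOp a a' q (travellingWave K k x₁ c g)
      (travellingWave K k x₁ c fun y => -k * g y - c * g' y)
      (travellingWave K k x₁ c g') (travellingWave K k x₁ c g'') x t
      = K * exp (-(k * t)) * (-k * g (x - (x₁ + c * t)) - c * g' (x - (x₁ + c * t))
        - (a x * g'' (x - (x₁ + c * t)) + a' x * g' (x - (x₁ + c * t)))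
        + q x * g (x - (x₁ + c * t))) := by
  simp only [parabolicOp, travellingWave]; ring

def cubicBump (ρ y : ℝ) : ℝ := (ρ ^ 2 - y ^ 2) ^ 3

def cubicBumpDeriv (ρ y : ℝ) : ℝ := -6 * y * (ρ ^ 2 - y ^ 2) ^ 2

def cubicBumpDeriv2 (ρ y : ℝ) : ℝ := 24 * y ^ 2 * (ρ ^ 2 - y ^ 2) - 6 * (ρ ^ 2 - y ^ 2) ^ 2

theorem hasDerivAt_cubicBump (ρ y : ℝ) : HasDerivAt (cubicBump ρ) (cubicBumpDeriv ρ y) y :=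
  (((hasDerivAt_pow 2 y).const_sub (ρ ^ 2)).pow 3).congr_deriv
    (by simp only [cubicBumpDeriv]; ring)

theorem hasDerivAt_cubicBumpDeriv (ρ y : ℝ) :
    HasDerivAt (cubicBumpDeriv ρ) (cubicBumpDeriv2 ρ y) y :=
  (((hasDerivAt_id y).const_mul (-6)).mul
    (((hasDerivAt_pow 2 y).const_sub (ρ ^ 2)).pow 2)).congr_deriv
    (by simp only [cubicBumpDeriv2, id, mul_one, Pi.pow_apply]; ring)

theorem cubicBump_subsolution {m B ρ c k α β γ y : ℝ} (hm : 0 < m) (hρ : 0 < ρ) (hy : |y| ≤ ρ)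
    (hα : m ≤ α) (hαB : α ≤ B) (hβ : |β| ≤ B) (hγ : γ ≤ B)
    (hk : (6 * (B + B * ρ + |c| * ρ + 4 * m)) ^ 2 < 96 * m * ρ ^ 2 * (k - B)) :
    -k * cubicBump ρ y - c * cubicBumpDeriv ρ y
      - (α * cubicBumpDeriv2 ρ y + β * cubicBumpDeriv ρ y) + γ * cubicBump ρ y ≤ 0 := by
  set C := 6 * (B + B * ρ + |c| * ρ + 4 * m)
  set F := ρ ^ 2 - y ^ 2 with hF
  have hF₀ : 0 ≤ F := by nlinarith [sq_abs y, abs_nonneg y]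
  have hcy : c * y ≤ |c| * ρ := (le_abs_self _).trans
    (by rw [abs_mul]; exact mul_le_mul_of_nonneg_left hy (abs_nonneg c))
  have hβy : β * y ≤ B * ρ := (le_abs_self _).trans
    (by rw [abs_mul]; exact mul_le_mul hβ hy (abs_nonneg y) ((abs_nonneg β).trans hβ))
  have hkB : 0 < k - B := by
    have : 0 < 96 * m * ρ ^ 2 * (k - B) := (sq_nonneg C).trans_lt hk
    exact pos_of_mul_pos_right this (by positivity)
  have hfactor : -k * cubicBump ρ y - c * cubicBumpDeriv ρ y
      - (α * cubicBumpDeriv2 ρ y + β * cubicBumpDeriv ρ y) + γ * cubicBump ρ y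
      = F * (-k * F ^ 2 + 6 * c * y * F - 24 * α * y ^ 2 + 6 * α * F + 6 * β * y * F
        + γ * F ^ 2) := by
    simp only [cubicBump, cubicBumpDeriv, cubicBumpDeriv2]; ring
  rw [hfactor]
  refine mul_nonpos_of_nonneg_of_nonpos hF₀ ?_
  -- the second factor is at most minus a quadratic in `F` with negative discriminant
  have hquad : 0 < (k - B) * F ^ 2 - C * F + 24 * m * ρ ^ 2 := by
    have : 0 < 4 * (k - B) * ((k - B) * F ^ 2 - C * F + 24 * m * ρ ^ 2) := by
      nlinarith [sq_nonneg (2 * (k - B) * F - C)]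
    exact pos_of_mul_pos_right this (by positivity)
  have h₁ : c * y * F ≤ |c| * ρ * F := mul_le_mul_of_nonneg_right hcy hF₀
  have h₂ : β * y * F ≤ B * ρ * F := mul_le_mul_of_nonneg_right hβy hF₀
  have h₃ : m * y ^ 2 ≤ α * y ^ 2 := mul_le_mul_of_nonneg_right hα (sq_nonneg y)
  have h₄ : α * F ≤ B * F := mul_le_mul_of_nonneg_right hαB hF₀
  have h₅ : γ * F ^ 2 ≤ B * F ^ 2 := mul_le_mul_of_nonneg_right hγ (sq_nonneg F)
  have hy2 : y ^ 2 = ρ ^ 2 - F := by rw [hF]; ring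
  rw [hy2] at h₃ ⊢
  linarith

theorem add_div_mul_mem_Icc_min_max {x₀ x₁ T t : ℝ} (hT : 0 < T) (ht : t ∈ Icc 0 T) :
    x₁ + (x₀ - x₁) / T * t ∈ Icc (min x₀ x₁) (max x₀ x₁) := by
  have hs : x₁ + (x₀ - x₁) / T * t = (1 - t / T) * x₁ + t / T * x₀ := by field_simp; ring
  have hs₀ : 0 ≤ t / T := div_nonneg ht.1 hT.le
  have hs₁ : 0 ≤ 1 - t / T := sub_nonneg.2 ((div_le_one hT).2 ht.2)
  rw [hs]
  constructor
  · nlinarith [mul_le_mul_of_nonneg_left (min_le_right x₀ x₁) hs₁,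
      mul_le_mul_of_nonneg_left (min_le_left x₀ x₁) hs₀]
  · nlinarith [mul_le_mul_of_nonneg_left (le_max_right x₀ x₁) hs₁,
      mul_le_mul_of_nonneg_left (le_max_left x₀ x₁) hs₀]

namespace HasClassicalDerivs

variable {l T : ℝ} {a a' q : ℝ → ℝ} {u ut ux uxx : ℝ → ℝ → ℝ}

theorem pos_at_end_of_tube (hu : HasClassicalDerivs l T u ut ux uxx)
    (hL : ∀ x ∈ Icc 0 l, ∀ t ∈ Ioc 0 T, parabolicOp a a' q u ut ux uxx x t = 0)
    (hu₀ : ∀ x ∈ Icc 0 l, ∀ t ∈ Icc 0 T, 0 ≤ u x t) (hT : 0 ≤ T)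
    (ha : ∀ x ∈ Ioo 0 l, 0 ≤ a x) (hq : ∀ x ∈ Ioo 0 l, 0 ≤ q x)
    {J : Set ℝ} (hJ : J ⊆ Ioo 0 l) {m B : ℝ} (hm : 0 < m) (hma : ∀ x ∈ J, m ≤ a x)
    (haB : ∀ x ∈ J, a x ≤ B) (ha'B : ∀ x ∈ J, |a' x| ≤ B) (hqB : ∀ x ∈ J, q x ≤ B)
    {x₁ c ρ c₀ : ℝ} (hρ : 0 < ρ) (hc₀ : 0 < c₀)
    (htube : ∀ t ∈ Icc 0 T, ∀ x, |x - (x₁ + c * t)| ≤ ρ → x ∈ J)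
    (hinit : ∀ x, |x - x₁| ≤ ρ → c₀ ≤ u x 0) :
    0 < u (x₁ + c * T) T := by
  obtain ⟨k, hk⟩ : ∃ k, (6 * (B + B * ρ + |c| * ρ + 4 * m)) ^ 2 < 96 * m * ρ ^ 2 * (k - B) := by
    have hmρ : 0 < 96 * m * ρ ^ 2 := by positivity
    generalize 6 * (B + B * ρ + |c| * ρ + 4 * m) = C
    refine ⟨B + C ^ 2 / (96 * m * ρ ^ 2) + 1, ?_⟩
    rw [show B + C ^ 2 / (96 * m * ρ ^ 2) + 1 - B = C ^ 2 / (96 * m * ρ ^ 2) + 1 by ring,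
      mul_add, mul_div_cancel₀ _ hmρ.ne']
    linarith
  obtain ⟨K, hK, hKρ⟩ : ∃ K > 0, K * ρ ^ 6 = c₀ := ⟨c₀ / ρ ^ 6, by positivity, by field_simp⟩
  have hcomp := le_on_tube_of_parabolicOp_le (a' := a') (path := fun t => x₁ + c * t)
    (by fun_prop) (hasClassicalDerivs_travellingWave (hasDerivAt_cubicBump ρ)
      (hasDerivAt_cubicBumpDeriv ρ) K k x₁ c) hu
    (fun t ht x hx => hJ (htube t ht x hx)) ha hq ?_ ?_ ?_ T ⟨hT, le_rfl⟩ (x₁ + c * T)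
    (by simpa using hρ.le)
  · refine lt_of_lt_of_le ?_ hcomp
    norm_num [travellingWave, cubicBump]
    positivity
  · intro t ht x hx
    have hxJ := htube t (Ioc_subset_Icc_self ht) x hx.le
    rw [hL x (Ioo_subset_Icc_self (hJ hxJ)) t ht, parabolicOp_travellingWave]
    exact mul_nonpos_of_nonneg_of_nonpos (by positivity) (cubicBump_subsolution hm hρ hx.le
      (hma x hxJ) (haB x hxJ) (ha'B x hxJ) (hqB x hxJ) hk)
  · intro t ht x hx
    have hzero : cubicBump ρ (x - (x₁ + c * t)) = 0 := by
      rw [cubicBump, ← sq_abs (x - _), hx]; ring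
    simpa [travellingWave, hzero] using hu₀ x (Ioo_subset_Icc_self (hJ (htube t ht x hx.le))) t ht
  · intro x hx
    simp only [mul_zero, add_zero] at hx
    refine le_trans ?_ (hinit x hx)
    calc travellingWave K k x₁ c (cubicBump ρ) x 0 = K * (ρ ^ 2 - (x - x₁) ^ 2) ^ 3 := by
          simp [travellingWave, cubicBump]
      _ ≤ K * (ρ ^ 2) ^ 3 := by
          gcongr
          · nlinarith [sq_abs (x - x₁), abs_nonneg (x - x₁)]
          · nlinarith [sq_nonneg (x - x₁)]
      _ = c₀ := by rw [← hKρ]; ring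

theorem pos_of_pos_initial (hu : HasClassicalDerivs l T u ut ux uxx)
    (hL : ∀ x ∈ Icc 0 l, ∀ t ∈ Ioc 0 T, parabolicOp a a' q u ut ux uxx x t = 0)
    (hu₀ : ∀ x ∈ Icc 0 l, ∀ t ∈ Icc 0 T, 0 ≤ u x t) (hT : 0 < T)
    (ha : ContinuousOn a (Icc 0 l)) (hapos : ∀ x ∈ Ioo 0 l, 0 < a x)
    (ha' : ContinuousOn a' (Icc 0 l)) (hq : ContinuousOn q (Icc 0 l))
    (hq₀ : ∀ x ∈ Ioo 0 l, 0 ≤ q x) {x₀ x₁ : ℝ} (hx₀ : x₀ ∈ Ioo 0 l) (hx₁ : x₁ ∈ Ioo 0 l)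
    (hux₁ : 0 < u x₁ 0) : 0 < u x₀ T := by
  have hcont : ContinuousAt (u · 0) x₁ :=
    (hu.continuousOn_slice (left_mem_Icc.2 hT.le) x₁ (Ioo_subset_Icc_self hx₁)).continuousAt
      (Icc_mem_nhds hx₁.1 hx₁.2)
  obtain ⟨ε, hε, hball⟩ :=
    Metric.eventually_nhds_iff.1 (hcont.eventually (lt_mem_nhds (half_lt_self hux₁)))
  set r := min ε (min (min x₀ x₁) (l - max x₀ x₁))
  have hr : 0 < r := lt_min hε (lt_min (lt_min hx₀.1 hx₁.1) (sub_pos.2 (max_lt hx₀.2 hx₁.2)))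
  have hrε : r ≤ ε := min_le_left _ _
  have hr₀ : r ≤ min x₀ x₁ := (min_le_right _ _).trans (min_le_left _ _)
  have hrₗ : r ≤ l - max x₀ x₁ := (min_le_right _ _).trans (min_le_right _ _)
  set J := Icc (min x₀ x₁ - r / 2) (max x₀ x₁ + r / 2)
  have hJ : J ⊆ Ioo 0 l := fun x hx => ⟨by linarith [hx.1], by linarith [hx.2]⟩
  have hJl : J ⊆ Icc 0 l := hJ.trans Ioo_subset_Icc_self
  have hJne : J.Nonempty := nonempty_Icc.2 (by linarith [min_le_max (a := x₀) (b := x₁)])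
  obtain ⟨xm, hxm, hmin⟩ := isCompact_Icc.exists_isMinOn hJne (ha.mono hJl)
  obtain ⟨B, hB⟩ := isCompact_Icc.exists_bound_of_continuousOn
    (((ha.abs.add ha'.abs).add hq.abs).mono hJl)
  have hB' : ∀ x ∈ J, |a x| + |a' x| + |q x| ≤ B := fun x hx => by
    simpa [abs_of_nonneg (by positivity : 0 ≤ |a x| + |a' x| + |q x|)] using hB x hx
  have hpos := hu.pos_at_end_of_tube (B := B) (x₁ := x₁) (c := (x₀ - x₁) / T) hL hu₀ hT.le
    (fun x hx => (hapos x hx).le) hq₀ hJ (hapos xm (hJ hxm)) (fun x hx => hmin hx)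
    (fun x hx => by linarith [le_abs_self (a x), abs_nonneg (a' x), abs_nonneg (q x), hB' x hx])
    (fun x hx => by linarith [abs_nonneg (a x), abs_nonneg (q x), hB' x hx])
    (fun x hx => by linarith [le_abs_self (q x), abs_nonneg (a x), abs_nonneg (a' x), hB' x hx])
    (half_pos hr) (half_pos hux₁)
    (fun t ht x hx => by
      obtain ⟨hpath₁, hpath₂⟩ := add_div_mul_mem_Icc_min_max (x₀ := x₀) (x₁ := x₁) hT ht
      constructor <;> linarith [(abs_le.1 hx).1, (abs_le.1 hx).2])
    (fun x hx => (hball (by rw [Real.dist_eq]; linarith)).le)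
  rwa [div_mul_cancel₀ _ hT.ne', add_sub_cancel] at hpos

end HasClassicalDerivs

section InverseProblem

variable {l T : ℝ} {a a' q₁ q₂ : ℝ → ℝ}
  {u₁ u₁t u₁x u₁xx u₂ u₂t u₂x u₂xx : ℝ → ℝ → ℝ}

theorem sub_mul_final_nonpos (hl : 0 < l) (hT : 0 < T)
    (hu₁ : HasClassicalDerivs l T u₁ u₁t u₁x u₁xx) (hu₂ : HasClassicalDerivs l T u₂ u₂t u₂x u₂xx)
    (hL₁ : ∀ x ∈ Icc 0 l, ∀ t ∈ Ioc 0 T, parabolicOp a a' q₁ u₁ u₁t u₁x u₁xx x t = 0)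
    (hL₂ : ∀ x ∈ Icc 0 l, ∀ t ∈ Ioc 0 T, parabolicOp a a' q₂ u₂ u₂t u₂x u₂xx x t = 0)
    (hle : ∀ x ∈ Icc 0 l, ∀ t ∈ Icc 0 T, u₁ x t ≤ u₂ x t)
    (hfinal : ∀ x ∈ Icc 0 l, u₁ x T = u₂ x T) :
    ∀ x ∈ Icc 0 l, (q₁ x - q₂ x) * u₁ x T ≤ 0 := by
  have hT' : T ∈ Ioc 0 T := ⟨hT, le_rfl⟩
  have hx_eq : ∀ x ∈ Icc 0 l, u₁x x T = u₂x x T := fun x hx =>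
    (uniqueDiffOn_Icc hl x hx).eq_deriv _ (hu₁.hasDerivWithinAt_x x hx T hT')
      ((hu₂.hasDerivWithinAt_x x hx T hT').congr hfinal (hfinal x hx))
  intro x hx
  have hxx_eq : u₁xx x T = u₂xx x T :=
    (uniqueDiffOn_Icc hl x hx).eq_deriv _ (hu₁.hasDerivWithinAt_xx x hx T hT')
      ((hu₂.hasDerivWithinAt_xx x hx T hT').congr hx_eq (hx_eq x hx))
  have hmax : IsMaxOn (fun t => u₁ x t - u₂ x t) (Icc 0 T) T := fun t ht => by
    simp only [mem_ofPred_eq, hfinal x hx, sub_self]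
    linarith [hle x hx t ht]
  have ht := hmax.localize.hasDerivWithinAt_Icc_right_nonneg hT
    ((hu₁.hasDerivWithinAt_t x hx T hT').sub (hu₂.hasDerivWithinAt_t x hx T hT'))
  have h₁ := hL₁ x hx T hT'
  have h₂ := hL₂ x hx T hT'
  unfold parabolicOp at h₁ h₂
  rw [hx_eq x hx, hxx_eq, hfinal x hx] at h₁
  rw [hfinal x hx]
  linarith

theorem coeff_eq_and_solution_eq_of_le (hl : 0 < l) (hT : 0 < T)
    (ha : ContinuousOn a (Icc 0 l)) (hapos : ∀ x ∈ Ioo 0 l, 0 < a x) (ha₀ : a 0 = 0)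
    (haₗ : a l = 0) (ha' : ContinuousOn a' (Icc 0 l)) (ha'₀ : a' 0 = 0) (ha'ₗ : a' l = 0)
    (hq₁ : ContinuousOn q₁ (Icc 0 l)) (hq₂ : ContinuousOn q₂ (Icc 0 l))
    (hq₂₀ : ∀ x ∈ Icc 0 l, 0 ≤ q₂ x) (hq : ∀ x ∈ Icc 0 l, q₂ x ≤ q₁ x)
    (hu₁ : HasClassicalDerivs l T u₁ u₁t u₁x u₁xx) (hu₂ : HasClassicalDerivs l T u₂ u₂t u₂x u₂xx)
    (hL₁ : ∀ x ∈ Icc 0 l, ∀ t ∈ Ioc 0 T, parabolicOp a a' q₁ u₁ u₁t u₁x u₁xx x t = 0)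
    (hL₂ : ∀ x ∈ Icc 0 l, ∀ t ∈ Ioc 0 T, parabolicOp a a' q₂ u₂ u₂t u₂x u₂xx x t = 0)
    {φ : ℝ → ℝ} (hinit₁ : ∀ x ∈ Ioo 0 l, u₁ x 0 = φ x) (hinit₂ : ∀ x ∈ Ioo 0 l, u₂ x 0 = φ x)
    (hφ₀ : ∀ x ∈ Ioo 0 l, 0 ≤ φ x) (hφ : ∃ x ∈ Ioo 0 l, φ x ≠ 0)
    (hfinal : ∀ x ∈ Icc 0 l, u₁ x T = u₂ x T) :
    (∀ x ∈ Icc 0 l, q₁ x = q₂ x) ∧ ∀ x ∈ Icc 0 l, ∀ t ∈ Icc 0 T, u₁ x t = u₂ x t := by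
  have ha₀' : ∀ x ∈ Ioo 0 l, 0 ≤ a x := fun x hx => (hapos x hx).le
  have hq₁₀ : ∀ x ∈ Icc 0 l, 0 ≤ q₁ x := fun x hx => (hq₂₀ x hx).trans (hq x hx)
  have hinit : ∀ x ∈ Ioo 0 l, u₁ x 0 = u₂ x 0 := fun x hx => (hinit₁ x hx).trans (hinit₂ x hx).symm
  have hu₁₀ : ∀ x ∈ Icc 0 l, ∀ t ∈ Icc 0 T, 0 ≤ u₁ x t :=
    le_of_parabolicOp_le HasClassicalDerivs.zero hu₁ ha₀' ha₀ haₗ ha'₀ ha'ₗ hq₁₀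
      (fun x hx t ht => by rw [hL₁ x hx t ht]; simp [parabolicOp])
      (HasClassicalDerivs.zero.initial_le_of_le_on_Ioo hu₁ hl hT.le fun x hx => by
        simpa [hinit₁ x hx] using hφ₀ x hx)
  have hu₁₂ : ∀ x ∈ Icc 0 l, ∀ t ∈ Icc 0 T, u₁ x t ≤ u₂ x t :=
    le_of_parabolicOp_le hu₁ hu₂ ha₀' ha₀ haₗ ha'₀ ha'ₗ hq₂₀
      (fun x hx t ht => by
        have h₁ := hL₁ x hx t ht
        have h₂ := hL₂ x hx t ht
        unfold parabolicOp at h₁ h₂ ⊢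
        nlinarith [mul_nonneg (sub_nonneg.2 (hq x hx)) (hu₁₀ x hx t (Ioc_subset_Icc_self ht))])
      (hu₁.initial_le_of_le_on_Ioo hu₂ hl hT.le fun x hx => (hinit x hx).le)
  have hfinal_pos : ∀ x ∈ Ioo 0 l, 0 < u₁ x T := by
    obtain ⟨x₁, hx₁, hφx₁⟩ := hφ
    have hux₁ : 0 < u₁ x₁ 0 := hinit₁ x₁ hx₁ ▸ (hφ₀ x₁ hx₁).lt_of_ne' hφx₁
    exact fun x hx => hu₁.pos_of_pos_initial hL₁ hu₁₀ hT ha hapos ha' hq₁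
      (fun y hy => hq₁₀ y (Ioo_subset_Icc_self hy)) hx hx₁ hux₁
  have hq_eq : EqOn q₁ q₂ (Icc 0 l) := by
    refine EqOn.of_subset_closure (fun x hx => ?_) hq₁ hq₂ Ioo_subset_Icc_self
      (closure_Ioo hl.ne).superset
    have := sub_mul_final_nonpos hl hT hu₁ hu₂ hL₁ hL₂ hu₁₂ hfinal x (Ioo_subset_Icc_self hx)
    have := hq x (Ioo_subset_Icc_self hx)
    nlinarith [hfinal_pos x hx]
  have hu₂₁ : ∀ x ∈ Icc 0 l, ∀ t ∈ Icc 0 T, u₂ x t ≤ u₁ x t :=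
    le_of_parabolicOp_le hu₂ hu₁ ha₀' ha₀ haₗ ha'₀ ha'ₗ hq₁₀
      (fun x hx t ht => by
        rw [hL₁ x hx t ht, ← hL₂ x hx t ht]
        simp only [parabolicOp, hq_eq hx, le_refl])
      (hu₂.initial_le_of_le_on_Ioo hu₁ hl hT.le fun x hx => (hinit x hx).ge)
  exact ⟨hq_eq, fun x hx t ht => (hu₁₂ x hx t ht).antisymm (hu₂₁ x hx t ht)⟩

end InverseProblem

theorem inverse_problem_uniqueness_general
    (l T δ : ℝ) (hl : 0 < l) (hT : 0 < T) (hδ : 0 < δ)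
    (a a' φ q₁ q₂ : ℝ → ℝ)
    (haW : ContDiffOn ℝ 4 a (Icc (-δ) (l + δ)))
    (hanneg : ∀ x ∈ Ioo (-δ) (l + δ), 0 ≤ a x)
    (ha0 : a 0 = 0) (hal : a l = 0)
    (hapos : ∀ x ∈ Ioo (0:ℝ) l, 0 < a x)
    (ha' : ∀ x ∈ Icc (0:ℝ) l, HasDerivWithinAt a (a' x) (Icc (0:ℝ) l) x)
    (hφn : ∀ x ∈ Ioo (0:ℝ) l, 0 ≤ φ x)
    (hφne : ∃ x ∈ Ioo (0:ℝ) l, φ x ≠ 0)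
    (hq₁W : ContDiffOn ℝ 3 q₁ (Icc (-δ) (l + δ)))
    (hq₂W : ContDiffOn ℝ 3 q₂ (Icc (-δ) (l + δ)))
    (hq₁n : ∀ x ∈ Ioo (-δ) (l + δ), 0 ≤ q₁ x)
    (hq₂n : ∀ x ∈ Ioo (-δ) (l + δ), 0 ≤ q₂ x)
    (hcomp : (∀ x ∈ Ioo (-δ) (l + δ), q₂ x ≤ q₁ x) ∨ (∀ x ∈ Ioo (-δ) (l + δ), q₁ x ≤ q₂ x))
    (u₁ u₁t u₁x u₁xx u₂ u₂t u₂x u₂xx : ℝ → ℝ → ℝ)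
    (hu₁W : ContDiffOn ℝ 3 (fun p : ℝ × ℝ => u₁ p.1 p.2) (Icc (0:ℝ) l ×ˢ Icc (0:ℝ) T))
    (hu₂W : ContDiffOn ℝ 3 (fun p : ℝ × ℝ => u₂ p.1 p.2) (Icc (0:ℝ) l ×ˢ Icc (0:ℝ) T))
    (hu₁t : ∀ x ∈ Icc (0:ℝ) l, ∀ t ∈ Ioc (0:ℝ) T,
      HasDerivWithinAt (fun τ => u₁ x τ) (u₁t x t) (Icc (0:ℝ) T) t)
    (hu₁x : ∀ x ∈ Icc (0:ℝ) l, ∀ t ∈ Ioc (0:ℝ) T,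
      HasDerivWithinAt (fun s => u₁ s t) (u₁x x t) (Icc (0:ℝ) l) x)
    (hu₁xx : ∀ x ∈ Icc (0:ℝ) l, ∀ t ∈ Ioc (0:ℝ) T,
      HasDerivWithinAt (fun s => u₁x s t) (u₁xx x t) (Icc (0:ℝ) l) x)
    (hu₂t : ∀ x ∈ Icc (0:ℝ) l, ∀ t ∈ Ioc (0:ℝ) T,
      HasDerivWithinAt (fun τ => u₂ x τ) (u₂t x t) (Icc (0:ℝ) T) t)
    (hu₂x : ∀ x ∈ Icc (0:ℝ) l, ∀ t ∈ Ioc (0:ℝ) T,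
      HasDerivWithinAt (fun s => u₂ s t) (u₂x x t) (Icc (0:ℝ) l) x)
    (hu₂xx : ∀ x ∈ Icc (0:ℝ) l, ∀ t ∈ Ioc (0:ℝ) T,
      HasDerivWithinAt (fun s => u₂x s t) (u₂xx x t) (Icc (0:ℝ) l) x)
    (hL₁ : ∀ x ∈ Icc (0:ℝ) l, ∀ t ∈ Ioc (0:ℝ) T,
      u₁t x t - (a x * u₁xx x t + a' x * u₁x x t) + q₁ x * u₁ x t = 0)
    (hL₂ : ∀ x ∈ Icc (0:ℝ) l, ∀ t ∈ Ioc (0:ℝ) T,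
      u₂t x t - (a x * u₂xx x t + a' x * u₂x x t) + q₂ x * u₂ x t = 0)
    (hinit₁ : ∀ x ∈ Ioo (0:ℝ) l, u₁ x 0 = φ x)
    (hinit₂ : ∀ x ∈ Ioo (0:ℝ) l, u₂ x 0 = φ x)
    (hfinal : ∀ x ∈ Icc (0:ℝ) l, u₁ x T = u₂ x T) :
    (∀ x ∈ Icc (0:ℝ) l, q₁ x = q₂ x) ∧
    (∀ x ∈ Icc (0:ℝ) l, ∀ t ∈ Icc (0:ℝ) T, u₁ x t = u₂ x t) := by
  have hsub : Icc 0 l ⊆ Ioo (-δ) (l + δ) := fun x hx => ⟨by linarith [hx.1], by linarith [hx.2]⟩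
  have hcont : ∀ {n : ℕ∞} {f : ℝ → ℝ}, ContDiffOn ℝ n f (Icc (-δ) (l + δ)) →
      ContinuousOn f (Icc 0 l) := fun h => h.continuousOn.mono (hsub.trans Ioo_subset_Icc_self)
  have hderiv : ∀ x ∈ Icc 0 l, HasDerivAt a (a' x) x := fun x hx =>
    (ha' x hx).hasDerivAt_of_differentiableAt (uniqueDiffOn_Icc hl x hx)
      ((haW.differentiableOn (by norm_num)).differentiableAt (Icc_mem_nhds (by linarith [hx.1])
        (by linarith [hx.2])))
  -- `0` and `l` are zeros of `a ≥ 0`, hence local minima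
  have hderiv_zero : ∀ x₀ ∈ Icc 0 l, a x₀ = 0 → a' x₀ = 0 := fun x₀ hx₀ h =>
    IsLocalMin.hasDerivAt_eq_zero (by
      filter_upwards [isOpen_Ioo.mem_nhds (hsub hx₀)] with x hx using h ▸ hanneg x hx)
      (hderiv x₀ hx₀)
  have ha'c : ContinuousOn a' (Icc 0 l) :=
    (((haW.mono Ioo_subset_Icc_self).continuousOn_deriv_of_isOpen isOpen_Ioo (by norm_num)).mono
      hsub).congr fun x hx => (hderiv x hx).deriv.symm
  have ha'₀ := hderiv_zero 0 (left_mem_Icc.2 hl.le) ha0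
  have ha'ₗ := hderiv_zero l (right_mem_Icc.2 hl.le) hal
  have hu₁ : HasClassicalDerivs l T u₁ u₁t u₁x u₁xx := ⟨hu₁W.continuousOn, hu₁t, hu₁x, hu₁xx⟩
  have hu₂ : HasClassicalDerivs l T u₂ u₂t u₂x u₂xx := ⟨hu₂W.continuousOn, hu₂t, hu₂x, hu₂xx⟩
  rcases hcomp with hc | hc
  · exact coeff_eq_and_solution_eq_of_le hl hT (hcont haW) hapos ha0 hal ha'c ha'₀ ha'ₗ
      (hcont hq₁W) (hcont hq₂W) (fun x hx => hq₂n x (hsub hx)) (fun x hx => hc x (hsub hx))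
      hu₁ hu₂ hL₁ hL₂ hinit₁ hinit₂ hφn hφne hfinal
  · obtain ⟨hq, hu⟩ := coeff_eq_and_solution_eq_of_le hl hT (hcont haW) hapos ha0 hal ha'c ha'₀
      ha'ₗ (hcont hq₂W) (hcont hq₁W) (fun x hx => hq₁n x (hsub hx)) (fun x hx => hc x (hsub hx))
      hu₂ hu₁ hL₂ hL₁ hinit₂ hinit₁ hφn hφne fun x hx => (hfinal x hx).symm
    exact ⟨fun x hx => (hq x hx).symm, fun x hx t ht => (hu x hx t ht).symm⟩

/-- Uniqueness for the inverse radiative coefficient problem (Theorem 2.5, in comparable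
pairs).  Sobolev regularity `W^{k,∞}` on the interval `G_δ = (−δ, l+δ)` (resp. on the
cylinder `Q̄`) is rendered as `ContDiffOn ℝ k` on the closed interval `[−δ, l+δ]` (resp. on
`[0,l] × [0,T]`), where all derivatives are automatically bounded by compactness.
If the comparable coefficients `q₁, q₂` produce solutions with the same final data at time
`T`, then `q₁ = q₂` on `[0,l]` and `u₁ = u₂` on `Q̄`. -/
theorem inverse_problem_uniqueness
    (l T δ : ℝ) (hl : 0 < l) (hT : 0 < T) (hδ : 0 < δ)
    (a a' φ q₁ q₂ : ℝ → ℝ)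
    (haW : ContDiffOn ℝ 4 a (Icc (-δ) (l + δ)))
    (hanneg : ∀ x ∈ Ioo (-δ) (l + δ), 0 ≤ a x)
    (ha0 : a 0 = 0) (hal : a l = 0)
    (hapos : ∀ x ∈ Ioo (0:ℝ) l, 0 < a x)
    (ha' : ∀ x ∈ Icc (0:ℝ) l, HasDerivWithinAt a (a' x) (Icc (0:ℝ) l) x)
    (hφW : ContDiffOn ℝ 5 φ (Icc (-δ) (l + δ)))
    (hφn : ∀ x ∈ Ioo (0:ℝ) l, 0 ≤ φ x)
    (hφne : ∃ x ∈ Ioo (0:ℝ) l, φ x ≠ 0)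
    (hq₁W : ContDiffOn ℝ 3 q₁ (Icc (-δ) (l + δ)))
    (hq₂W : ContDiffOn ℝ 3 q₂ (Icc (-δ) (l + δ)))
    (hq₁n : ∀ x ∈ Ioo (-δ) (l + δ), 0 ≤ q₁ x)
    (hq₂n : ∀ x ∈ Ioo (-δ) (l + δ), 0 ≤ q₂ x)
    (hcomp : (∀ x ∈ Ioo (-δ) (l + δ), q₂ x ≤ q₁ x) ∨ (∀ x ∈ Ioo (-δ) (l + δ), q₁ x ≤ q₂ x))
    (u₁ u₁t u₁x u₁xx u₂ u₂t u₂x u₂xx : ℝ → ℝ → ℝ)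
    (hu₁W : ContDiffOn ℝ 3 (fun p : ℝ × ℝ => u₁ p.1 p.2) (Icc (0:ℝ) l ×ˢ Icc (0:ℝ) T))
    (hu₂W : ContDiffOn ℝ 3 (fun p : ℝ × ℝ => u₂ p.1 p.2) (Icc (0:ℝ) l ×ˢ Icc (0:ℝ) T))
    (hu₁t : ∀ x ∈ Icc (0:ℝ) l, ∀ t ∈ Ioc (0:ℝ) T,
      HasDerivWithinAt (fun τ => u₁ x τ) (u₁t x t) (Icc (0:ℝ) T) t)
    (hu₁x : ∀ x ∈ Icc (0:ℝ) l, ∀ t ∈ Ioc (0:ℝ) T,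
      HasDerivWithinAt (fun s => u₁ s t) (u₁x x t) (Icc (0:ℝ) l) x)
    (hu₁xx : ∀ x ∈ Icc (0:ℝ) l, ∀ t ∈ Ioc (0:ℝ) T,
      HasDerivWithinAt (fun s => u₁x s t) (u₁xx x t) (Icc (0:ℝ) l) x)
    (hu₂t : ∀ x ∈ Icc (0:ℝ) l, ∀ t ∈ Ioc (0:ℝ) T,
      HasDerivWithinAt (fun τ => u₂ x τ) (u₂t x t) (Icc (0:ℝ) T) t)
    (hu₂x : ∀ x ∈ Icc (0:ℝ) l, ∀ t ∈ Ioc (0:ℝ) T,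
      HasDerivWithinAt (fun s => u₂ s t) (u₂x x t) (Icc (0:ℝ) l) x)
    (hu₂xx : ∀ x ∈ Icc (0:ℝ) l, ∀ t ∈ Ioc (0:ℝ) T,
      HasDerivWithinAt (fun s => u₂x s t) (u₂xx x t) (Icc (0:ℝ) l) x)
    (hL₁ : ∀ x ∈ Icc (0:ℝ) l, ∀ t ∈ Ioc (0:ℝ) T,
      u₁t x t - (a x * u₁xx x t + a' x * u₁x x t) + q₁ x * u₁ x t = 0)
    (hL₂ : ∀ x ∈ Icc (0:ℝ) l, ∀ t ∈ Ioc (0:ℝ) T,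
      u₂t x t - (a x * u₂xx x t + a' x * u₂x x t) + q₂ x * u₂ x t = 0)
    (hinit₁ : ∀ x ∈ Ioo (0:ℝ) l, u₁ x 0 = φ x)
    (hinit₂ : ∀ x ∈ Ioo (0:ℝ) l, u₂ x 0 = φ x)
    (hfinal : ∀ x ∈ Icc (0:ℝ) l, u₁ x T = u₂ x T) :
    (∀ x ∈ Icc (0:ℝ) l, q₁ x = q₂ x) ∧
    (∀ x ∈ Icc (0:ℝ) l, ∀ t ∈ Icc (0:ℝ) T, u₁ x t = u₂ x t) :=
  inverse_problem_uniqueness_general l T δ hl hT hδ a a' φ q₁ q₂ haW hanneg ha0 hal hapos ha' hφn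
    hφne hq₁W hq₂W hq₁n hq₂n hcomp u₁ u₁t u₁x u₁xx u₂ u₂t u₂x u₂xx hu₁W hu₂W hu₁t hu₁x hu₁xx hu₂t
    hu₂x hu₂xx hL₁ hL₂ hinit₁ hinit₂ hfinal
end
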